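/- arXiv:2509.25059 — 2 statements merged into one kernel-verified Lean document; each statement's English description precedes it below -/
import Mathlib

section
/- Let p ≥ 1 and let {ω(a) : a ∈ ℤ²} be i.i.d. real random variables with E|ω(0,0)|^p < ∞, and let F be the interpolated ensemble built from ω. Then for all positive integers N and n, E[ max |L_F(a;b) − L_ω(a;b)| ] ≤ n·((N+1)·E|ω(0,0)|^p)^{1/p}, where the maximum is over all pairs a ≤ b of points of ([0,N] × [0,n]) ∩ ℤ², and L_F(a;b) denotes the semi-discrete passage time L_F(x,m;y,n') for a = (x,m), b = (y,n'). -/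
open MeasureTheory ProbabilityTheory Filter

/-- Semi-discrete last passage time for a line ensemble `G : ℤ → ℝ → ℝ`. -/
noncomputable def semiLPP (G : ℤ → ℝ → ℝ) (x : ℝ) (m : ℤ) (y : ℝ) (n : ℤ) : ℝ :=
  sSup {S : ℝ | ∃ z : ℤ → ℝ,
    z (m - 1) = x ∧ z n = y ∧
    (∀ i j : ℤ, m - 1 ≤ i → i ≤ j → j ≤ n → z i ≤ z j) ∧
    S = ∑ i ∈ Finset.Icc m n, (G i (z i) - G i (z (i - 1)))}

/-- The interpolated ensemble built from weights `w : ℤ × ℤ → ℝ`. -/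
noncomputable def interpEnsemble (w : ℤ × ℤ → ℝ) (i : ℤ) (u : ℝ) : ℝ :=
  (∑ j ∈ Finset.Ico (0 : ℤ) ⌊u⌋, w (j, i)) + (u - (⌊u⌋ : ℝ)) * w (⌊u⌋, i)

/-- Lattice last passage time. -/
noncomputable def latticeLPP (w : ℤ × ℤ → ℝ) (a b : ℤ × ℤ) : ℝ :=
  sSup {S : ℝ | ∃ (N : ℕ) (π : ℕ → ℤ × ℤ),
    π 0 = a ∧ (π N = b - (1, 0) ∨ π N = b - (0, 1)) ∧
    (∀ k < N, π (k + 1) - π k = (1, 0) ∨ π (k + 1) - π k = (0, 1)) ∧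
    S = ∑ k ∈ Finset.range (N + 1), w (π k)}

open Finset
open scoped ENNReal

noncomputable def Ssum (w : ℤ × ℤ → ℝ) (i k : ℤ) : ℝ := ∑ j ∈ Finset.Ico (0:ℤ) k, w (j, i)

lemma Ssum_succ (w : ℤ × ℤ → ℝ) (i k : ℤ) (h : 0 ≤ k) :
    Ssum w i (k+1) = Ssum w i k + w (k, i) := by
  unfold Ssum
  have : Finset.Ico (0:ℤ) (k+1) = insert k (Finset.Ico (0:ℤ) k) := by
    ext j; simp [Finset.mem_Ico, Finset.mem_insert]; omega
  rw [this, Finset.sum_insert (by simp)]; ring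

def IsChainZ (x m y n' : ℤ) (z : ℤ → ℤ) : Prop :=
  z (m-1) = x ∧ z n' = y ∧ ∀ i j, m-1 ≤ i → i ≤ j → j ≤ n' → z i ≤ z j

noncomputable def iSum (w : ℤ × ℤ → ℝ) (m n' : ℤ) (z : ℤ → ℤ) : ℝ :=
  ∑ i ∈ Finset.Icc m n', (Ssum w i (z i) - Ssum w i (z (i-1)))

noncomputable def corr (w : ℤ × ℤ → ℝ) (m n' : ℤ) (z : ℤ → ℤ) : ℝ :=
  ∑ i ∈ Finset.Ico m n', w (z i, i)

lemma sum_Icc_bot {M : Type*} [AddCommGroup M] (f : ℤ → M) {m n' : ℤ} (h : m ≤ n') :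
    ∑ i ∈ Finset.Icc m n', f i = f m + ∑ i ∈ Finset.Icc (m+1) n', f i := by
  have : Finset.Icc m n' = insert m (Finset.Icc (m+1) n') := by
    ext j; simp only [Finset.mem_Icc, Finset.mem_insert]; omega
  rw [this, Finset.sum_insert (by simp)]

lemma sum_Ico_bot {M : Type*} [AddCommGroup M] (f : ℤ → M) {m n' : ℤ} (h : m < n') :
    ∑ i ∈ Finset.Ico m n', f i = f m + ∑ i ∈ Finset.Ico (m+1) n', f i := by
  have : Finset.Ico m n' = insert m (Finset.Ico (m+1) n') := by
    ext j; simp only [Finset.mem_Ico, Finset.mem_insert]; omega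
  rw [this, Finset.sum_insert (by simp)]


lemma path_eq_chain (w : ℤ × ℤ → ℝ) :
    ∀ (L : ℕ) (π : ℕ → ℤ × ℤ) (x m y n' : ℤ), 0 ≤ x →
    π 0 = (x, m) →
    (π L = (y - 1, n') ∨ π L = (y, n' - 1)) →
    (∀ k < L, π (k+1) - π k = (1,0) ∨ π (k+1) - π k = (0,1)) →
    m ≤ n' ∧ x ≤ y ∧ ∃ z : ℤ → ℤ, IsChainZ x m y n' z ∧
      ∑ k ∈ Finset.range (L+1), w (π k) = iSum w m n' z + corr w m n' z := by
  intro L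
  induction L with
  | zero =>
    intro π x m y n' hx h0 hend _
    rcases hend with hend | hend
    · -- (x, m) = (y-1, n')
      rw [h0] at hend
      have hxy : x = y - 1 := congrArg Prod.fst hend
      have hmn : m = n' := congrArg Prod.snd hend
      subst hmn
      set z : ℤ → ℤ := fun i => if i = m then y else x with hzdef
      have hza : z m = y := by simp [hzdef]
      have hzb : z (m - 1) = x := by simp [hzdef, show m - 1 ≠ m by omega]
      refine ⟨le_refl _, by omega, z, ⟨hzb, hza, ?_⟩, ?_⟩
      · intro i j _ hij _
        simp only [hzdef]
        split_ifs <;> omega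
      · simp only [zero_add, Finset.range_one, Finset.sum_singleton, h0]
        unfold iSum corr
        rw [Finset.Icc_self, Finset.sum_singleton, Finset.Ico_self, Finset.sum_empty,
          hza, hzb, show y = x + 1 by omega, Ssum_succ w m x hx]
        ring
    · -- (x, m) = (y, n'-1)
      rw [h0] at hend
      have hxy : x = y := congrArg Prod.fst hend
      have hmn : m = n' - 1 := congrArg Prod.snd hend
      refine ⟨by omega, by omega, fun _ => x, ⟨rfl, by simpa using hxy, fun _ _ _ _ _ => le_refl _⟩, ?_⟩
      simp only [zero_add, Finset.range_one, Finset.sum_singleton, h0]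
      unfold iSum corr
      rw [Finset.sum_eq_zero (fun i _ => by ring)]
      rw [show Finset.Ico m n' = {m} by ext j; simp only [Finset.mem_Ico, Finset.mem_singleton]; omega]
      rw [Finset.sum_singleton, hxy]
      ring
  | succ L IH =>
    intro π x m y n' hx h0 hend hstep
    set π' : ℕ → ℤ × ℤ := fun k => π (k+1) with hπ'
    have hstep' : ∀ k < L, π' (k+1) - π' k = (1,0) ∨ π' (k+1) - π' k = (0,1) := by
      intro k hk; exact hstep (k+1) (by omega)
    have hend' : π' L = (y - 1, n') ∨ π' L = (y, n' - 1) := hend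
    have hsum0 : ∑ k ∈ Finset.range (L+1+1), w (π k)
        = (∑ k ∈ Finset.range (L+1), w (π' k)) + w (π 0) := by
      rw [Finset.sum_range_succ' (fun k => w (π k)) (L+1)]
    rcases hstep 0 (by omega) with h1 | h1
    · -- first step right
      have hπ1 : π' 0 = (x + 1, m) := by
        have h2 := sub_eq_iff_eq_add.mp h1
        show π (0+1) = _
        rw [h2, h0, Prod.mk_add_mk]
        simp only [Prod.mk.injEq]
        omega
      obtain ⟨hmn, hxy, z', hz', hsum'⟩ := IH π' (x+1) m y n' (by omega) hπ1 hend' hstep'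
      obtain ⟨hz1, hz2, hz3⟩ := hz'
      set z : ℤ → ℤ := Function.update z' (m-1) x with hzdef
      have hza : z (m-1) = x := Function.update_self _ _ _
      have hzne : ∀ i, i ≠ m - 1 → z i = z' i := fun i hi => Function.update_of_ne hi _ _
      refine ⟨hmn, by omega, z, ⟨hza, ?_, ?_⟩, ?_⟩
      · rw [hzne n' (by omega)]; exact hz2
      · intro i j hi hij hj
        by_cases h2 : i = m - 1
        · by_cases h3 : j = m - 1
          · rw [h2, h3]
          · rw [h2, hza, hzne j h3]
            have : z' (m-1) ≤ z' j := hz3 (m-1) j (le_refl _) (by omega) hj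
            omega
        · rw [hzne i h2, hzne j (by omega)]
          exact hz3 i j hi hij hj
      · rw [hsum0, hsum', h0]
        have hcorr : corr w m n' z = corr w m n' z' :=
          Finset.sum_congr rfl (fun i hi => by
            rw [Finset.mem_Ico] at hi
            rw [hzne i (by omega)])
        have hiSum : iSum w m n' z = iSum w m n' z' + w (x, m) := by
          unfold iSum
          have hrest : ∑ i ∈ Finset.Icc (m+1) n', (Ssum w i (z i) - Ssum w i (z (i-1)))
              = ∑ i ∈ Finset.Icc (m+1) n', (Ssum w i (z' i) - Ssum w i (z' (i-1))) := by
            refine Finset.sum_congr rfl (fun i hi => ?_)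
            rw [Finset.mem_Icc] at hi
            rw [hzne i (by omega), hzne (i-1) (by omega)]
          rw [sum_Icc_bot _ hmn, sum_Icc_bot _ hmn, hrest,
            hzne m (by omega), hza, hz1, Ssum_succ w m x hx]
          ring
        rw [hcorr, hiSum]; ring
    · -- first step up
      have hπ1 : π' 0 = (x, m + 1) := by
        have h2 := sub_eq_iff_eq_add.mp h1
        show π (0+1) = _
        rw [h2, h0, Prod.mk_add_mk]
        simp only [Prod.mk.injEq]
        omega
      obtain ⟨hmn, hxy, z', hz', hsum'⟩ := IH π' x (m+1) y n' hx hπ1 hend' hstep'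
      obtain ⟨hz1, hz2, hz3⟩ := hz'
      have hz1' : z' m = x := by rw [show m = m + 1 - 1 by omega]; exact hz1
      set z : ℤ → ℤ := Function.update z' (m-1) x with hzdef
      have hza : z (m-1) = x := Function.update_self _ _ _
      have hzne : ∀ i, i ≠ m - 1 → z i = z' i := fun i hi => Function.update_of_ne hi _ _
      refine ⟨by omega, hxy, z, ⟨hza, ?_, ?_⟩, ?_⟩
      · rw [hzne n' (by omega)]; exact hz2
      · intro i j hi hij hj
        by_cases h2 : i = m - 1
        · by_cases h3 : j = m - 1
          · rw [h2, h3]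
          · rw [h2, hza, hzne j h3]
            calc x = z' m := hz1'.symm
            _ ≤ z' j := hz3 m j (by omega) (by omega) hj
        · rw [hzne i h2, hzne j (by omega)]
          exact hz3 i j (by omega) hij hj
      · rw [hsum0, hsum', h0]
        have hcorr : corr w m n' z = w (x, m) + corr w (m+1) n' z' := by
          unfold corr
          rw [sum_Ico_bot _ (show m < n' by omega)]
          congr 1
          · rw [hzne m (by omega), hz1']
          · exact Finset.sum_congr rfl (fun i hi => by
              rw [Finset.mem_Ico] at hi
              rw [hzne i (by omega)])
        have hiSum : iSum w m n' z = iSum w (m+1) n' z' := by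
          unfold iSum
          have hrest : ∑ i ∈ Finset.Icc (m+1) n', (Ssum w i (z i) - Ssum w i (z (i-1)))
              = ∑ i ∈ Finset.Icc (m+1) n', (Ssum w i (z' i) - Ssum w i (z' (i-1))) := by
            refine Finset.sum_congr rfl (fun i hi => ?_)
            rw [Finset.mem_Icc] at hi
            rw [hzne i (by omega), hzne (i-1) (by omega)]
          rw [sum_Icc_bot _ (show m ≤ n' by omega), hrest,
            hzne m (by omega), hza, hz1']
          ring
        rw [hcorr, hiSum]; ring

lemma chain_to_path (w : ℤ × ℤ → ℝ) :
    ∀ (K : ℕ) (x m y n' : ℤ) (z : ℤ → ℤ), 0 ≤ x → x ≤ y → m ≤ n' →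
    IsChainZ x m y n' z → (y - x) + (n' - m) = K → 1 ≤ K →
    ∃ (L : ℕ) (π : ℕ → ℤ × ℤ), π 0 = (x, m) ∧
      (π L = (y - 1, n') ∨ π L = (y, n' - 1)) ∧
      (∀ k < L, π (k+1) - π k = (1,0) ∨ π (k+1) - π k = (0,1)) ∧
      ∑ k ∈ Finset.range (L+1), w (π k) = iSum w m n' z + corr w m n' z := by
  intro K
  induction K with
  | zero => intro x m y n' z _ _ _ _ _ h; omega
  | succ K IH =>
    intro x m y n' z hx hxy hmn hz hK _
    obtain ⟨hz1, hz2, hz3⟩ := hz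
    have hzm_lb : x ≤ z m := by
      have := hz3 (m-1) m (le_refl _) (by omega) (by omega)
      omega
    have hzm_ub : z m ≤ y := by
      have := hz3 m n' (by omega) hmn (le_refl _)
      omega
    by_cases hK1 : K = 0
    · -- base: measure 1
      subst hK1
      have hsplit : (y = x + 1 ∧ n' = m) ∨ (y = x ∧ n' = m + 1) := by omega
      rcases hsplit with ⟨hy, hn⟩ | ⟨hy, hn⟩
      · have hzmy : z m = y := by rw [← hn]; exact hz2
        refine ⟨0, fun _ => (x, m), rfl, Or.inl (by simp only [Prod.mk.injEq]; omega),
          by intro k hk; exact absurd hk (Nat.not_lt_zero k), ?_⟩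
        simp only [zero_add, Finset.range_one, Finset.sum_singleton]
        unfold iSum corr
        rw [hn, Finset.Icc_self, Finset.sum_singleton, Finset.Ico_self, Finset.sum_empty,
          hz1, hzmy, show y = x + 1 by omega, Ssum_succ w m x hx]
        ring
      · have hzm : z m = x := by omega
        have hzn : z (m + 1) = y := by rw [← hn]; exact hz2
        refine ⟨0, fun _ => (x, m), rfl, Or.inr (by simp only [Prod.mk.injEq]; omega),
          by intro k hk; exact absurd hk (Nat.not_lt_zero k), ?_⟩
        simp only [zero_add, Finset.range_one, Finset.sum_singleton]
        unfold iSum corr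
        rw [hn, sum_Icc_bot _ (show m ≤ m + 1 by omega), Finset.Icc_self, Finset.sum_singleton,
          show Finset.Ico m (m+1) = {m} by ext j; simp only [Finset.mem_Ico, Finset.mem_singleton]; omega,
          Finset.sum_singleton, hz1, hzm, show m + 1 - 1 = m from by ring, hzm, hzn,
          show y = x by omega]
        ring
    · -- step: measure ≥ 2
      have hK2 : 1 ≤ K := by omega
      by_cases hcase : x < z m
      · -- right step
        set z' : ℤ → ℤ := Function.update z (m-1) (x+1) with hz'def
        have hz'a : z' (m-1) = x + 1 := Function.update_self _ _ _
        have hz'ne : ∀ i, i ≠ m - 1 → z' i = z i := fun i hi => Function.update_of_ne hi _ _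
        have hch' : IsChainZ (x+1) m y n' z' := by
          refine ⟨hz'a, by rw [hz'ne n' (by omega)]; exact hz2, ?_⟩
          intro i j hi hij hj
          by_cases h2 : i = m - 1
          · by_cases h3 : j = m - 1
            · rw [h2, h3]
            · rw [h2, hz'a, hz'ne j h3]
              have : z m ≤ z j := hz3 m j (by omega) (by omega) hj
              omega
          · rw [hz'ne i h2, hz'ne j (by omega)]
            exact hz3 i j hi hij hj
        obtain ⟨L', π', hp0, hpend, hpstep, hpsum⟩ :=
          IH (x+1) m y n' z' (by omega) (by omega) hmn hch' (by omega) hK2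
        refine ⟨L'+1, fun k => if k = 0 then (x, m) else π' (k-1), by simp, ?_, ?_, ?_⟩
        · simpa using hpend
        · intro k hk
          rcases Nat.eq_zero_or_pos k with rfl | hkpos
          · left
            show π' 0 - (x, m) = (1, 0)
            rw [hp0]
            simp only [Prod.mk_sub_mk, Prod.mk.injEq]
            omega
          · obtain ⟨j, rfl⟩ := Nat.exists_eq_add_of_le hkpos
            simp only [if_neg (by omega : ¬ (1 + j + 1) = 0), if_neg (by omega : ¬ (1 + j) = 0)]
            rw [show 1 + j + 1 - 1 = (1 + j - 1) + 1 by omega]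
            exact hpstep (1 + j - 1) (by omega)
        · rw [Finset.sum_range_succ' (fun k => w (if k = 0 then (x, m) else π' (k-1))) (L'+1)]
          have he : ∀ k, (if k + 1 = 0 then (x, m) else π' (k + 1 - 1)) = π' k := by
            intro k; rw [if_neg (by omega : ¬ (k+1) = 0), Nat.add_sub_cancel]
          simp only [he, eq_self_iff_true, if_true, reduceIte]
          rw [hpsum]
          have hcorr : corr w m n' z' = corr w m n' z :=
            Finset.sum_congr rfl (fun i hi => by
              rw [Finset.mem_Ico] at hi
              rw [hz'ne i (by omega)])
          have hiSum : iSum w m n' z = iSum w m n' z' + w (x, m) := by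
            unfold iSum
            have hrest : ∑ i ∈ Finset.Icc (m+1) n', (Ssum w i (z' i) - Ssum w i (z' (i-1)))
                = ∑ i ∈ Finset.Icc (m+1) n', (Ssum w i (z i) - Ssum w i (z (i-1))) := by
              refine Finset.sum_congr rfl (fun i hi => ?_)
              rw [Finset.mem_Icc] at hi
              rw [hz'ne i (by omega), hz'ne (i-1) (by omega)]
            rw [sum_Icc_bot _ hmn, sum_Icc_bot _ hmn, hrest,
              hz'ne m (by omega), hz'a, hz1, Ssum_succ w m x hx]
            ring
          rw [hcorr, hiSum]; ring
      · -- up step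
        have hzm : z m = x := by omega
        have hmlt : m < n' := by
          rcases lt_or_eq_of_le hmn with h | h
          · exact h
          · exfalso; rw [h] at hzm; omega
        have hch' : IsChainZ x (m+1) y n' z := by
          refine ⟨by rw [show m + 1 - 1 = m by omega]; exact hzm, hz2, ?_⟩
          intro i j hi hij hj
          exact hz3 i j (by omega) hij hj
        obtain ⟨L', π', hp0, hpend, hpstep, hpsum⟩ :=
          IH x (m+1) y n' z hx hxy (by omega) hch' (by omega) hK2
        refine ⟨L'+1, fun k => if k = 0 then (x, m) else π' (k-1), by simp, ?_, ?_, ?_⟩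
        · simpa using hpend
        · intro k hk
          rcases Nat.eq_zero_or_pos k with rfl | hkpos
          · right
            show π' 0 - (x, m) = (0, 1)
            rw [hp0]
            simp only [Prod.mk_sub_mk, Prod.mk.injEq]
            omega
          · obtain ⟨j, rfl⟩ := Nat.exists_eq_add_of_le hkpos
            simp only [if_neg (by omega : ¬ (1 + j + 1) = 0), if_neg (by omega : ¬ (1 + j) = 0)]
            rw [show 1 + j + 1 - 1 = (1 + j - 1) + 1 by omega]
            exact hpstep (1 + j - 1) (by omega)
        · rw [Finset.sum_range_succ' (fun k => w (if k = 0 then (x, m) else π' (k-1))) (L'+1)]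
          have he : ∀ k, (if k + 1 = 0 then (x, m) else π' (k + 1 - 1)) = π' k := by
            intro k; rw [if_neg (by omega : ¬ (k+1) = 0), Nat.add_sub_cancel]
          simp only [he, eq_self_iff_true, if_true, reduceIte]
          rw [hpsum]
          have hiSum : iSum w m n' z = iSum w (m+1) n' z := by
            unfold iSum
            rw [sum_Icc_bot _ hmn, hz1, hzm]
            ring
          have hcorr : corr w m n' z = w (x, m) + corr w (m+1) n' z := by
            unfold corr
            rw [sum_Ico_bot _ hmlt, hzm]
          rw [hcorr, hiSum]; ring


lemma interp_int (w : ℤ × ℤ → ℝ) (i k : ℤ) : interpEnsemble w i (k:ℝ) = Ssum w i k := by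
  simp [interpEnsemble, Ssum, Int.floor_intCast]

lemma path_coord_sum {L : ℕ} {π : ℕ → ℤ × ℤ}
    (hstep : ∀ k < L, π (k+1) - π k = (1,0) ∨ π (k+1) - π k = (0,1)) :
    ∀ j, j ≤ L → (π j).1 + (π j).2 = (π 0).1 + (π 0).2 + j := by
  intro j
  induction j with
  | zero => intro _; simp
  | succ j ihj =>
    intro hj
    have h1 := ihj (by omega)
    rcases hstep j (by omega) with h | h <;>
    · have e := sub_eq_iff_eq_add.mp h
      rw [e]
      simp only [Prod.fst_add, Prod.snd_add]
      push_cast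
      omega

lemma path_mono {L : ℕ} {π : ℕ → ℤ × ℤ}
    (hstep : ∀ k < L, π (k+1) - π k = (1,0) ∨ π (k+1) - π k = (0,1)) :
    ∀ i j, i ≤ j → j ≤ L → (π i).1 ≤ (π j).1 ∧ (π i).2 ≤ (π j).2 := by
  intro i j hij
  induction j, hij using Nat.le_induction with
  | base => intro _; exact ⟨le_refl _, le_refl _⟩
  | succ j hij ih =>
    intro hjL
    have h1 := ih (by omega)
    rcases hstep j (by omega) with h | h <;>
    · have e := sub_eq_iff_eq_add.mp h
      rw [e]
      simp only [Prod.fst_add, Prod.snd_add]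
      omega

lemma path_sum_le (w : ℤ × ℤ → ℝ) {L : ℕ} {π : ℕ → ℤ × ℤ} {x m y n' : ℤ}
    (h0 : π 0 = (x, m)) (hend : π L = (y - 1, n') ∨ π L = (y, n' - 1))
    (hstep : ∀ k < L, π (k+1) - π k = (1,0) ∨ π (k+1) - π k = (0,1)) :
    ∑ k ∈ Finset.range (L+1), w (π k) ≤ ∑ p ∈ Finset.Icc x y ×ˢ Finset.Icc m n', |w p| := by
  have hbox : ∀ k, k ≤ L → π k ∈ Finset.Icc x y ×ˢ Finset.Icc m n' := by
    intro k hk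
    have h1 := path_mono hstep 0 k (by omega) hk
    have h2 := path_mono hstep k L hk (le_refl _)
    rw [h0] at h1
    rw [Finset.mem_product]
    rcases hend with he | he <;> rw [he] at h2 <;>
      · simp only [Finset.mem_Icc]
        simp only [Prod.fst, Prod.snd] at h1 h2
        omega
  calc ∑ k ∈ Finset.range (L+1), w (π k) ≤ ∑ k ∈ Finset.range (L+1), |w (π k)| :=
        Finset.sum_le_sum (fun k _ => le_abs_self _)
  _ = ∑ p ∈ (Finset.range (L+1)).image π, |w p| := by
        rw [Finset.sum_image]
        intro a ha b hb hab
        rw [Finset.mem_coe, Finset.mem_range] at ha hb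
        have h1 := path_coord_sum hstep a (by omega)
        have h2 := path_coord_sum hstep b (by omega)
        rw [hab] at h1
        omega
  _ ≤ ∑ p ∈ Finset.Icc x y ×ˢ Finset.Icc m n', |w p| := by
        refine Finset.sum_le_sum_of_subset_of_nonneg ?_ (fun _ _ _ => abs_nonneg _)
        intro p hp
        rw [Finset.mem_image] at hp
        obtain ⟨k, hk, rfl⟩ := hp
        rw [Finset.mem_range] at hk
        exact hbox k (by omega)

lemma lattice_deg (w : ℤ × ℤ → ℝ) (x m : ℤ) : latticeLPP w (x, m) (x, m) = 0 := by
  unfold latticeLPP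
  have : {S : ℝ | ∃ (N : ℕ) (π : ℕ → ℤ × ℤ),
      π 0 = (x, m) ∧ (π N = (x, m) - (1, 0) ∨ π N = (x, m) - (0, 1)) ∧
      (∀ k < N, π (k + 1) - π k = (1, 0) ∨ π (k + 1) - π k = (0, 1)) ∧
      S = ∑ k ∈ Finset.range (N + 1), w (π k)} = ∅ := by
    rw [Set.eq_empty_iff_forall_notMem]
    rintro S ⟨L, π, h0, hend, hstep, rfl⟩
    have h1 := path_coord_sum hstep L (le_refl _)
    rw [h0] at h1
    rcases hend with he | he <;> rw [he] at h1 <;>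
      simp only [Prod.mk_sub_mk, Prod.fst, Prod.snd] at h1 <;> omega
  rw [this, Real.sSup_empty]

lemma semi_deg (G : ℤ → ℝ → ℝ) (c : ℝ) (m : ℤ) : semiLPP G c m c m = 0 := by
  unfold semiLPP
  have : {S : ℝ | ∃ z : ℤ → ℝ,
      z (m - 1) = c ∧ z m = c ∧
      (∀ i j : ℤ, m - 1 ≤ i → i ≤ j → j ≤ m → z i ≤ z j) ∧
      S = ∑ i ∈ Finset.Icc m m, (G i (z i) - G i (z (i - 1)))} = {0} := by
    ext S
    simp only [Set.mem_setOf_eq, Set.mem_singleton_iff]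
    constructor
    · rintro ⟨z, hz1, hz2, hz3, rfl⟩
      rw [Finset.Icc_self, Finset.sum_singleton, hz2, hz1]
      ring
    · rintro rfl
      exact ⟨fun _ => c, rfl, rfl, fun _ _ _ _ _ => le_refl _, by
        rw [Finset.Icc_self, Finset.sum_singleton]; ring⟩
  rw [this, csSup_singleton]

lemma ii_ite (c A B : ℝ) : IntervalIntegrable (fun t => if t < c then A else B)
    MeasureTheory.volume (0:ℝ) 1 := by
  have hmeas : Measurable (fun t : ℝ => if t < c then A else B) :=
    Measurable.ite (measurableSet_lt measurable_id measurable_const)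
      measurable_const measurable_const
  rw [intervalIntegrable_iff]
  refine MeasureTheory.Integrable.mono' (g := fun _ => max |A| |B|)
    (MeasureTheory.integrableOn_const ?_ enorm_ne_top) hmeas.aestronglyMeasurable ?_
  · rw [Set.uIoc_of_le zero_le_one, Real.volume_Ioc]
    exact ENNReal.ofReal_ne_top
  refine Filter.Eventually.of_forall (fun t => ?_)
  by_cases h : t < c <;> simp [h, Real.norm_eq_abs, le_max_left, le_max_right]

lemma integral_ite (c A B : ℝ) (hc0 : 0 ≤ c) (hc1 : c ≤ 1) :
    ∫ t in (0:ℝ)..1, (if t < c then A else B) = c * A + (1 - c) * B := by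
  have hsplit : ∫ t in (0:ℝ)..1, (if t < c then A else B)
      = (∫ t in (0:ℝ)..c, (if t < c then A else B))
        + ∫ t in c..(1:ℝ), (if t < c then A else B) := by
    have i1 : IntervalIntegrable (fun t => if t < c then A else B) MeasureTheory.volume 0 c := by
      refine (ii_ite c A B).mono_set ?_
      rw [Set.uIcc_of_le hc0, Set.uIcc_of_le zero_le_one]
      exact Set.Icc_subset_Icc (le_refl _) hc1
    have i2 : IntervalIntegrable (fun t => if t < c then A else B) MeasureTheory.volume c 1 := by
      refine (ii_ite c A B).mono_set ?_
      rw [Set.uIcc_of_le hc1, Set.uIcc_of_le zero_le_one]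
      exact Set.Icc_subset_Icc hc0 (le_refl _)
    rw [intervalIntegral.integral_add_adjacent_intervals i1 i2]
  have h1 : ∫ t in (0:ℝ)..c, (if t < c then A else B) = c * A := by
    have hne : ∀ᵐ (t:ℝ) ∂MeasureTheory.volume, t ≠ c := by
      rw [MeasureTheory.ae_iff]
      have : {t : ℝ | ¬ t ≠ c} = {c} := by ext t; simp
      rw [this]
      exact Real.volume_singleton
    have : ∫ t in (0:ℝ)..c, (if t < c then A else B) = ∫ _t in (0:ℝ)..c, A := by
      refine intervalIntegral.integral_congr_ae ?_
      filter_upwards [hne] with t ht hmem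
      rw [Set.uIoc_of_le hc0] at hmem
      rw [if_pos (lt_of_le_of_ne hmem.2 ht)]
    rw [this, intervalIntegral.integral_const, smul_eq_mul]
    ring
  have h2 : ∫ t in c..(1:ℝ), (if t < c then A else B) = (1 - c) * B := by
    have : ∫ t in c..(1:ℝ), (if t < c then A else B) = ∫ _t in c..(1:ℝ), B := by
      refine intervalIntegral.integral_congr (fun t ht => ?_)
      rw [Set.uIcc_of_le hc1] at ht
      rw [if_neg (not_lt.2 ht.1)]
    rw [this, intervalIntegral.integral_const, smul_eq_mul]
  rw [hsplit, h1, h2]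

lemma round_chain_le (w : ℤ × ℤ → ℝ) (x m y n' : ℤ) (hx : 0 ≤ x) (B : ℝ)
    (z : ℤ → ℝ) (hz1 : z (m-1) = (x:ℝ)) (hz2 : z n' = (y:ℝ))
    (hz3 : ∀ i j : ℤ, m-1 ≤ i → i ≤ j → j ≤ n' → z i ≤ z j)
    (hB : ∀ zi : ℤ → ℤ, IsChainZ x m y n' zi → iSum w m n' zi ≤ B) :
    ∑ i ∈ Finset.Icc m n', (interpEnsemble w i (z i) - interpEnsemble w i (z (i-1))) ≤ B := by
  classical
  set zt : ℝ → ℤ → ℤ := fun t i => ⌊z i⌋ + (if t < Int.fract (z i) then 1 else 0) with hzt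
  have hchain : ∀ t : ℝ, 0 ≤ t → IsChainZ x m y n' (zt t) := by
    intro t ht
    refine ⟨?_, ?_, ?_⟩
    · show ⌊z (m-1)⌋ + (if t < Int.fract (z (m-1)) then 1 else 0) = x
      rw [hz1, Int.floor_intCast, Int.fract_intCast, if_neg (not_lt.2 ht)]
      ring
    · show ⌊z n'⌋ + (if t < Int.fract (z n') then 1 else 0) = y
      rw [hz2, Int.floor_intCast, Int.fract_intCast, if_neg (not_lt.2 ht)]
      ring
    · intro i j hi hij hj
      have hzij : z i ≤ z j := hz3 i j hi hij hj
      have hf : ⌊z i⌋ ≤ ⌊z j⌋ := Int.floor_le_floor hzij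
      show ⌊z i⌋ + (if t < Int.fract (z i) then 1 else 0)
        ≤ ⌊z j⌋ + (if t < Int.fract (z j) then 1 else 0)
      by_cases heq : ⌊z i⌋ = ⌊z j⌋
      · have hfr : Int.fract (z i) ≤ Int.fract (z j) := by
          unfold Int.fract
          rw [heq]
          linarith
        split_ifs with h1 h2
        · omega
        · exact absurd (lt_of_lt_of_le h1 hfr) h2
        · omega
        · omega
      · have : ⌊z i⌋ + 1 ≤ ⌊z j⌋ := by omega
        split_ifs <;> omega
  have hwin : ∀ i : ℤ, m - 1 ≤ i → i ≤ n' → (0:ℝ) ≤ z i := by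
    intro i h1 h2
    have := hz3 (m-1) i (le_refl _) h1 h2
    rw [hz1] at this
    have : (0:ℝ) ≤ (x:ℝ) := by exact_mod_cast hx
    linarith [hz3 (m-1) i (le_refl _) h1 h2, (show ((x:ℤ):ℝ) = (x:ℝ) from rfl)]
  have hform : ∀ (i : ℤ) (u : ℝ), (fun t => Ssum w i (⌊u⌋ + (if t < Int.fract u then 1 else 0)))
      = fun t => if t < Int.fract u then Ssum w i (⌊u⌋ + 1) else Ssum w i ⌊u⌋ := by
    intro i u
    funext t
    by_cases h : t < Int.fract u <;> simp [h]
  have hii : ∀ (i : ℤ) (u : ℝ),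
      IntervalIntegrable (fun t => Ssum w i (⌊u⌋ + (if t < Int.fract u then 1 else 0)))
        MeasureTheory.volume (0:ℝ) 1 := by
    intro i u
    rw [hform i u]
    exact ii_ite _ _ _
  have hval : ∀ (i : ℤ) (u : ℝ), 0 ≤ u →
      (∫ t in (0:ℝ)..1, Ssum w i (⌊u⌋ + (if t < Int.fract u then 1 else 0)))
        = interpEnsemble w i u := by
    intro i u hu
    rw [hform i u, integral_ite _ _ _ (Int.fract_nonneg u) (le_of_lt (Int.fract_lt_one u)),
      Ssum_succ w i ⌊u⌋ (Int.le_floor.2 (by exact_mod_cast hu))]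
    show _ = Ssum w i ⌊u⌋ + (u - (⌊u⌋ : ℝ)) * w (⌊u⌋, i)
    unfold Int.fract
    ring
  have hint : ∀ i ∈ Finset.Icc m n',
      IntervalIntegrable (fun t => Ssum w i (zt t i) - Ssum w i (zt t (i-1)))
        MeasureTheory.volume (0:ℝ) 1 :=
    fun i _ => (hii i (z i)).sub (hii i (z (i-1)))
  have hiiSum : IntervalIntegrable (fun t => iSum w m n' (zt t)) MeasureTheory.volume (0:ℝ) 1 := by
    have e : (fun t => iSum w m n' (zt t))
        = ∑ i ∈ Finset.Icc m n', (fun t => Ssum w i (zt t i) - Ssum w i (zt t (i-1))) := by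
      funext t
      rw [Finset.sum_apply]
      rfl
    rw [e]
    exact IntervalIntegrable.sum _ hint
  have key : ∑ i ∈ Finset.Icc m n', (interpEnsemble w i (z i) - interpEnsemble w i (z (i-1)))
      = ∫ t in (0:ℝ)..1, iSum w m n' (zt t) := by
    have h1 : (∫ t in (0:ℝ)..1, iSum w m n' (zt t))
        = ∑ i ∈ Finset.Icc m n', ∫ t in (0:ℝ)..1,
            (Ssum w i (zt t i) - Ssum w i (zt t (i-1))) := by
      rw [← intervalIntegral.integral_finset_sum hint]
      rfl
    rw [h1]
    refine (Finset.sum_congr rfl (fun i hi => ?_)).symm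
    rw [Finset.mem_Icc] at hi
    rw [intervalIntegral.integral_sub (hii i (z i)) (hii i (z (i-1)))]
    rw [hval i (z i) (hwin i (by omega) (by omega)),
      hval i (z (i-1)) (hwin (i-1) (by omega) (by omega))]
  rw [key]
  calc ∫ t in (0:ℝ)..1, iSum w m n' (zt t) ≤ ∫ _t in (0:ℝ)..1, B :=
        intervalIntegral.integral_mono_on zero_le_one hiiSum intervalIntegrable_const
          (fun t ht => hB (zt t) (hchain t ht.1))
  _ = B := by rw [intervalIntegral.integral_const, smul_eq_mul]; ring

lemma det (w : ℤ × ℤ → ℝ) (x m y n' : ℤ) (hx : 0 ≤ x) (hxy : x ≤ y) (hm : m ≤ n')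
    (K : ℤ → ℝ) (hK0 : ∀ i, 0 ≤ K i) (hK : ∀ j i : ℤ, x ≤ j → j ≤ y → |w (j, i)| ≤ K i) :
    |semiLPP (interpEnsemble w) (x:ℝ) m (y:ℝ) n' - latticeLPP w (x, m) (y, n')|
      ≤ ∑ i ∈ Finset.Ico m n', K i := by
  classical
  set KS := ∑ i ∈ Finset.Ico m n', K i with hKSdef
  have hKS0 : 0 ≤ KS := Finset.sum_nonneg (fun i _ => hK0 i)
  by_cases hdeg : x = y ∧ m = n'
  · obtain ⟨h1, h2⟩ := hdeg
    subst h1 h2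
    rw [semi_deg, lattice_deg]
    simpa using hKS0
  · have hside : 1 ≤ ((y - x) + (n' - m)).toNat := by omega
    have hb1 : ((y, n') : ℤ × ℤ) - (1, 0) = (y - 1, n') := by
      simp [Prod.mk_sub_mk]
    have hb2 : ((y, n') : ℤ × ℤ) - (0, 1) = (y, n' - 1) := by
      simp [Prod.mk_sub_mk]
    set LatSet : Set ℝ := {S : ℝ | ∃ (L : ℕ) (π : ℕ → ℤ × ℤ),
      π 0 = (x, m) ∧ (π L = ((y, n') : ℤ × ℤ) - (1, 0) ∨ π L = ((y, n') : ℤ × ℤ) - (0, 1)) ∧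
      (∀ k < L, π (k + 1) - π k = (1, 0) ∨ π (k + 1) - π k = (0, 1)) ∧
      S = ∑ k ∈ Finset.range (L + 1), w (π k)} with hLatSet
    set SemiSet : Set ℝ := {S : ℝ | ∃ z : ℤ → ℝ,
      z (m - 1) = (x:ℝ) ∧ z n' = (y:ℝ) ∧
      (∀ i j : ℤ, m - 1 ≤ i → i ≤ j → j ≤ n' → z i ≤ z j) ∧
      S = ∑ i ∈ Finset.Icc m n', (interpEnsemble w i (z i) - interpEnsemble w i (z (i - 1)))} with hSemiSet
    have hsemi_eq : semiLPP (interpEnsemble w) (x:ℝ) m (y:ℝ) n' = sSup SemiSet := rfl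
    have hlat_eq : latticeLPP w (x, m) (y, n') = sSup LatSet := rfl
    -- corr bound
    have hcorrb : ∀ zi : ℤ → ℤ, IsChainZ x m y n' zi → |corr w m n' zi| ≤ KS := by
      rintro zi ⟨h1, h2, h3⟩
      refine (Finset.abs_sum_le_sum_abs _ _).trans (Finset.sum_le_sum ?_)
      intro i hi
      rw [Finset.mem_Ico] at hi
      have hlb : x ≤ zi i := by
        have := h3 (m-1) i (le_refl _) (by omega) (by omega); omega
      have hub : zi i ≤ y := by
        have := h3 i n' (by omega) (by omega) (le_refl _); omega
      exact hK (zi i) i hlb hub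
    -- bounded above lattice set
    have hLatBdd : BddAbove LatSet := by
      refine ⟨∑ p ∈ Finset.Icc x y ×ˢ Finset.Icc m n', |w p|, ?_⟩
      rintro S ⟨L, π, h0, hend, hstep, rfl⟩
      rw [hb1, hb2] at hend
      exact path_sum_le w h0 hend hstep
    -- int chain bound
    have hIB : ∀ zi : ℤ → ℤ, IsChainZ x m y n' zi →
        iSum w m n' zi ≤ sSup LatSet + KS := by
      intro zi hzi
      obtain ⟨L, π, h0, hend, hstep, hsum⟩ :=
        chain_to_path w ((y - x) + (n' - m)).toNat x m y n' zi hx hxy hm hzi (by omega) hside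
      have hmem : (∑ k ∈ Finset.range (L + 1), w (π k)) ∈ LatSet :=
        ⟨L, π, h0, by rw [hb1, hb2]; exact hend, hstep, rfl⟩
      have h1 : ∑ k ∈ Finset.range (L + 1), w (π k) ≤ sSup LatSet := le_csSup hLatBdd hmem
      have h2 := hcorrb zi hzi
      have h3 := abs_le.1 h2
      linarith [hsum]
    -- semi elements bounded
    have hSemiLe : ∀ S ∈ SemiSet, S ≤ sSup LatSet + KS := by
      rintro S ⟨z, hz1, hz2, hz3, rfl⟩
      exact round_chain_le w x m y n' hx _ z hz1 hz2 hz3 hIB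
    -- semi nonempty
    have hSemiNe : SemiSet.Nonempty := by
      refine ⟨_, ⟨fun i => if i ≤ m - 1 then (x:ℝ) else (y:ℝ), by simp, ?_, ?_, rfl⟩⟩
      · show (if n' ≤ m - 1 then (x:ℝ) else (y:ℝ)) = (y:ℝ)
        rw [if_neg (by omega : ¬ n' ≤ m - 1)]
      · intro i j _ hij _
        have hxyr : (x:ℝ) ≤ (y:ℝ) := by exact_mod_cast hxy
        show (if i ≤ m - 1 then (x:ℝ) else (y:ℝ)) ≤ (if j ≤ m - 1 then (x:ℝ) else (y:ℝ))
        split_ifs with h1 h2 h2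
        · exact le_refl _
        · exact hxyr
        · omega
        · exact le_refl _
    have hSemiBdd : BddAbove SemiSet := ⟨sSup LatSet + KS, hSemiLe⟩
    have H2 : sSup SemiSet ≤ sSup LatSet + KS := csSup_le hSemiNe hSemiLe
    -- lattice elements bounded by semi + KS
    have hLatLe : ∀ S ∈ LatSet, S ≤ sSup SemiSet + KS := by
      rintro S ⟨L, π, h0, hend, hstep, rfl⟩
      rw [hb1, hb2] at hend
      obtain ⟨hmn2, hxy2, zi, hzi, hsum⟩ := path_eq_chain w L π x m y n' hx h0 hend hstep
      have hmem : iSum w m n' zi ∈ SemiSet := by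
        refine ⟨fun i => ((zi i : ℤ) : ℝ), ?_, ?_, ?_, ?_⟩
        · show ((zi (m-1) : ℤ) : ℝ) = ((x : ℤ) : ℝ)
          exact_mod_cast hzi.1
        · show ((zi n' : ℤ) : ℝ) = ((y : ℤ) : ℝ)
          exact_mod_cast hzi.2.1
        · intro i j hi hij hj
          show ((zi i : ℤ) : ℝ) ≤ ((zi j : ℤ) : ℝ)
          exact_mod_cast hzi.2.2 i j hi hij hj
        · unfold iSum
          refine (Finset.sum_congr rfl (fun i _ => ?_)).symm
          rw [interp_int, interp_int]
      have h1 : iSum w m n' zi ≤ sSup SemiSet := le_csSup hSemiBdd hmem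
      have h2 := abs_le.1 (hcorrb zi hzi)
      linarith [hsum]
    -- lattice nonempty
    have hLatNe : LatSet.Nonempty := by
      have hzi : IsChainZ x m y n' (fun i => if i ≤ m - 1 then x else y) := by
        refine ⟨by simp, ?_, ?_⟩
        · show (if n' ≤ m - 1 then x else y) = y
          rw [if_neg (by omega : ¬ n' ≤ m - 1)]
        · intro i j _ hij _
          show (if i ≤ m - 1 then x else y) ≤ (if j ≤ m - 1 then x else y)
          split_ifs <;> omega
      obtain ⟨L, π, h0, hend, hstep, hsum⟩ :=
        chain_to_path w ((y - x) + (n' - m)).toNat x m y n' _ hx hxy hm hzi (by omega) hside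
      exact ⟨_, ⟨L, π, h0, by rw [hb1, hb2]; exact hend, hstep, rfl⟩⟩
    have H1 : sSup LatSet ≤ sSup SemiSet + KS := csSup_le hLatNe hLatLe
    rw [hsemi_eq, hlat_eq]
    rw [abs_sub_le_iff]
    constructor <;> linarith

open MeasureTheory ProbabilityTheory
open scoped ENNReal

lemma integral_sup_abs_le {Ω : Type*} [MeasureSpace Ω] [IsProbabilityMeasure (ℙ : Measure Ω)]
    {p : ℝ} (hp : 1 ≤ p) {ι : Type*} (s : Finset ι) (hs : s.Nonempty)
    (f : ι → Ω → ℝ) (hfm : ∀ j, Measurable (f j)) (A : ℝ≥0∞) (hA : A ≠ ⊤)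
    (hA' : ∀ j ∈ s, ∫⁻ x, (‖f j x‖₊ : ℝ≥0∞) ^ p ∂ℙ = A) :
    ∫ x, s.sup' hs (fun j => |f j x|) ∂ℙ ≤ ((s.card : ℝ≥0∞) * A).toReal ^ (1/p) := by
  classical
  set g : Ω → ℝ := fun x => s.sup' hs (fun j => |f j x|) with hgdef
  have hgm : Measurable g := by
    have h1 := Finset.measurable_sup' hs (fun j (_ : j ∈ s) => (hfm j).abs)
    have h2 : g = s.sup' hs (fun j x => |f j x|) := by
      funext x
      rw [hgdef, Finset.sup'_apply]
    rw [h2]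
    exact h1
  obtain ⟨j0, hj0⟩ := hs
  have hg0 : ∀ x, 0 ≤ g x := fun x =>
    le_trans (abs_nonneg (f j0 x)) (Finset.le_sup' (fun j => |f j x|) hj0)
  have hp0 : (0:ℝ) < p := by linarith
  have hq0 : (ENNReal.ofReal p) ≠ 0 := by
    simp only [ne_eq, ENNReal.ofReal_eq_zero, not_le]; linarith
  have hqt : (ENNReal.ofReal p).toReal = p := ENNReal.toReal_ofReal (le_of_lt hp0)
  have h1p : (0:ℝ) ≤ 1/p := by positivity
  have hpt : ∀ x, (‖g x‖₊ : ℝ≥0∞) ^ p ≤ ∑ j ∈ s, (‖f j x‖₊ : ℝ≥0∞) ^ p := by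
    intro x
    obtain ⟨j₁, hj₁, hj⟩ := Finset.exists_mem_eq_sup' ⟨j0, hj0⟩ (fun j => |f j x|)
    calc (‖g x‖₊ : ℝ≥0∞) ^ p = (‖f j₁ x‖₊ : ℝ≥0∞) ^ p := by
          rw [show g x = |f j₁ x| from hj, Real.nnnorm_abs]
    _ ≤ ∑ j ∈ s, (‖f j x‖₊ : ℝ≥0∞) ^ p :=
          Finset.single_le_sum (f := fun j => (‖f j x‖₊ : ℝ≥0∞) ^ p) (fun j _ => bot_le) hj₁
  have hjm : ∀ j : ι, Measurable (fun x => (‖f j x‖₊ : ℝ≥0∞) ^ p) :=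
    fun j => ((hfm j).nnnorm.coe_nnreal_ennreal).pow_const p
  have hlin : ∫⁻ x, (‖g x‖₊ : ℝ≥0∞) ^ p ∂ℙ ≤ (s.card : ℝ≥0∞) * A := by
    calc ∫⁻ x, (‖g x‖₊ : ℝ≥0∞) ^ p ∂ℙ ≤ ∫⁻ x, ∑ j ∈ s, (‖f j x‖₊ : ℝ≥0∞) ^ p ∂ℙ :=
          lintegral_mono hpt
    _ = ∑ j ∈ s, ∫⁻ x, (‖f j x‖₊ : ℝ≥0∞) ^ p ∂ℙ := lintegral_finset_sum s (fun j _ => hjm j)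
    _ = ∑ _j ∈ s, A := Finset.sum_congr rfl hA'
    _ = (s.card : ℝ≥0∞) * A := by rw [Finset.sum_const, nsmul_eq_mul]
  have help1 : eLpNorm g 1 ℙ ≤ eLpNorm g (ENNReal.ofReal p) ℙ :=
    eLpNorm_le_eLpNorm_of_exponent_le (ENNReal.one_le_ofReal.2 hp) hgm.aestronglyMeasurable
  have help2 : eLpNorm g (ENNReal.ofReal p) ℙ ≤ ((s.card : ℝ≥0∞) * A) ^ (1/p) := by
    rw [eLpNorm_eq_lintegral_rpow_enorm_toReal hq0 ENNReal.ofReal_ne_top, hqt]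
    exact ENNReal.rpow_le_rpow hlin h1p
  have hfin : ((s.card : ℝ≥0∞) * A) ^ (1/p) ≠ ⊤ :=
    ENNReal.rpow_ne_top_of_nonneg h1p (ENNReal.mul_ne_top (ENNReal.natCast_ne_top _) hA)
  have heq : ∫ x, g x ∂ℙ = (eLpNorm g 1 ℙ).toReal := by
    rw [integral_eq_lintegral_of_nonneg_ae (Filter.Eventually.of_forall hg0)
      hgm.aestronglyMeasurable, eLpNorm_one_eq_lintegral_enorm]
    congr 1
    exact lintegral_congr (fun x => by rw [← Real.enorm_eq_ofReal (hg0 x)])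
  rw [heq]
  calc (eLpNorm g 1 ℙ).toReal ≤ (((s.card : ℝ≥0∞) * A) ^ (1/p)).toReal :=
        ENNReal.toReal_mono hfin (le_trans help1 help2)
  _ = ((s.card : ℝ≥0∞) * A).toReal ^ (1/p) := (ENNReal.toReal_rpow _ _).symm


/-- for i.i.d. weights with a finite `p`-th moment (`p ≥ 1`), the expected maximal
discrepancy between the semi-discrete passage times of the interpolated ensemble and the lattice
passage times, over all pairs `a ≤ b` in the box `[0,N] × [0,n]`, is at most
`n * ((N+1) * E|ω(0,0)|^p)^(1/p)`. -/
theorem stmt3 {Ω : Type*} [MeasureSpace Ω] [IsProbabilityMeasure (ℙ : Measure Ω)]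
    (p : ℝ) (hp : 1 ≤ p)
    (ω : ℤ × ℤ → Ω → ℝ) (hmeas : ∀ a, Measurable (ω a))
    (hindep : iIndepFun ω ℙ)
    (hident : ∀ a, IdentDistrib (ω a) (ω (0, 0)) ℙ ℙ)
    (hmom : MemLp (ω (0, 0)) (ENNReal.ofReal p) ℙ)
    (N n : ℕ) (hN : 1 ≤ N) (hn : 1 ≤ n) :
    (∫ x, sSup {D : ℝ | ∃ a b : ℤ × ℤ,
        a.1 ∈ Set.Icc (0 : ℤ) (N : ℤ) ∧ a.2 ∈ Set.Icc (0 : ℤ) (n : ℤ) ∧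
        b.1 ∈ Set.Icc (0 : ℤ) (N : ℤ) ∧ b.2 ∈ Set.Icc (0 : ℤ) (n : ℤ) ∧
        a.1 ≤ b.1 ∧ a.2 ≤ b.2 ∧
        D = |semiLPP (interpEnsemble (fun r => ω r x)) (a.1 : ℝ) a.2 (b.1 : ℝ) b.2 -
              latticeLPP (fun r => ω r x) a b|} ∂ℙ) ≤
      (n : ℝ) * (((N : ℝ) + 1) * ∫ x, |ω (0, 0) x| ^ p ∂ℙ) ^ (1 / p) := by
  classical
  have hp0 : (0:ℝ) < p := by linarith
  have hNn : (0:ℤ) ≤ (N:ℤ) := Int.natCast_nonneg N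
  have hnn : (0:ℤ) ≤ (n:ℤ) := Int.natCast_nonneg n
  have hne : (Finset.Icc (0:ℤ) (N:ℤ)).Nonempty := ⟨0, Finset.mem_Icc.2 ⟨le_refl _, hNn⟩⟩
  set M : ℤ → Ω → ℝ := fun i x => (Finset.Icc (0:ℤ) (N:ℤ)).sup' hne (fun j => |ω (j, i) x|)
    with hMdef
  have hM0 : ∀ (i : ℤ) (x : Ω), 0 ≤ M i x := fun i x =>
    le_trans (abs_nonneg (ω (0, i) x))
      (Finset.le_sup' (fun j => |ω (j, i) x|) (Finset.mem_Icc.2 ⟨le_refl _, hNn⟩))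
  have hMle : ∀ (j i : ℤ) (x : Ω), 0 ≤ j → j ≤ (N:ℤ) → |ω (j, i) x| ≤ M i x :=
    fun j i x h1 h2 => Finset.le_sup' (fun j => |ω (j, i) x|) (Finset.mem_Icc.2 ⟨h1, h2⟩)
  have hMm : ∀ i : ℤ, Measurable (M i) := by
    intro i
    have h1 := Finset.measurable_sup' hne (fun j (_ : j ∈ Finset.Icc (0:ℤ) (N:ℤ)) =>
      (hmeas (j, i)).abs)
    have h2 : M i = (Finset.Icc (0:ℤ) (N:ℤ)).sup' hne (fun j x => |ω (j, i) x|) := by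
      funext x
      simp [hMdef, Finset.sup'_apply]
    rw [h2]
    exact h1
  set A : ℝ≥0∞ := ∫⁻ x, (‖ω (0,0) x‖₊ : ℝ≥0∞) ^ p ∂ℙ with hAdef
  have hq0 : (ENNReal.ofReal p) ≠ 0 := by
    simp only [ne_eq, ENNReal.ofReal_eq_zero, not_le]; linarith
  have hA_fin : A ≠ ⊤ := by
    have h := hmom.eLpNorm_lt_top
    rw [eLpNorm_eq_lintegral_rpow_enorm_toReal hq0 ENNReal.ofReal_ne_top,
      ENNReal.toReal_ofReal (le_of_lt hp0)] at h
    change A ^ (1 / p) < ⊤ at h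
    intro hA
    rw [hA, ENNReal.top_rpow_of_pos (by positivity)] at h
    exact absurd h (lt_irrefl ⊤)
  have hmeasfn : Measurable (fun t : ℝ => (‖t‖₊ : ℝ≥0∞) ^ p) :=
    (measurable_nnnorm.coe_nnreal_ennreal).pow_const p
  have hAj : ∀ a : ℤ × ℤ, ∫⁻ x, (‖ω a x‖₊ : ℝ≥0∞) ^ p ∂ℙ = A :=
    fun a => ((hident a).comp hmeasfn).lintegral_eq
  have hAtoReal : A.toReal = ∫ x, |ω (0,0) x| ^ p ∂ℙ := by
    rw [integral_eq_lintegral_of_nonneg_ae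
      (Filter.Eventually.of_forall (fun x => Real.rpow_nonneg (abs_nonneg _) p))
      (((hmeas (0,0)).abs.pow_const p).aestronglyMeasurable)]
    congr 1
    refine lintegral_congr (fun x => ?_)
    calc (‖ω (0,0) x‖₊ : ℝ≥0∞) ^ p = (‖(|ω (0,0) x|)‖₊ : ℝ≥0∞) ^ p := by rw [Real.nnnorm_abs]
    _ = (ENNReal.ofReal |ω (0,0) x|) ^ p := by rw [← Real.enorm_eq_ofReal (abs_nonneg _)]; rfl
    _ = ENNReal.ofReal (|ω (0,0) x| ^ p) :=
        ENNReal.ofReal_rpow_of_nonneg (abs_nonneg _) (le_of_lt hp0)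
  have hcard : (Finset.Icc (0:ℤ) (N:ℤ)).card = N + 1 := by
    rw [Int.card_Icc]
    omega
  have hrow : ∀ i : ℤ, ∫ x, M i x ∂ℙ ≤ (((N:ℝ) + 1) * ∫ x, |ω (0,0) x| ^ p ∂ℙ) ^ (1/p) := by
    intro i
    have h := integral_sup_abs_le hp (Finset.Icc (0:ℤ) (N:ℤ)) hne (fun j => ω (j, i))
      (fun j => hmeas (j, i)) A hA_fin (fun j _ => hAj (j, i))
    have hR : (((Finset.Icc (0:ℤ) (N:ℤ)).card : ℝ≥0∞) * A).toReal ^ (1/p)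
        = (((N:ℝ) + 1) * ∫ x, |ω (0,0) x| ^ p ∂ℙ) ^ (1/p) := by
      rw [ENNReal.toReal_mul, ENNReal.toReal_natCast, hcard, ← hAtoReal]
      push_cast
      ring_nf
    rw [← hR, hMdef]
    exact h
  have hint : ∀ j : ℤ × ℤ, Integrable (ω j) ℙ := by
    intro j
    have h1 : MemLp (ω j) (ENNReal.ofReal p) ℙ := (hident j).symm.memLp_snd hmom
    have h2 : MemLp (ω j) 1 ℙ := h1.mono_exponent (ENNReal.one_le_ofReal.2 hp)
    exact memLp_one_iff_integrable.mp h2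
  have hMint : ∀ i : ℤ, Integrable (M i) ℙ := by
    intro i
    refine Integrable.mono' (g := fun x => ∑ j ∈ Finset.Icc (0:ℤ) (N:ℤ), |ω (j, i) x|)
      (integrable_finset_sum _ (fun j _ => (hint (j, i)).abs))
      (hMm i).aestronglyMeasurable ?_
    refine Filter.Eventually.of_forall (fun x => ?_)
    rw [Real.norm_eq_abs, abs_of_nonneg (hM0 i x), hMdef]
    exact Finset.sup'_le hne _ (fun j hj =>
      Finset.single_le_sum (f := fun j => |ω (j, i) x|) (fun k _ => abs_nonneg _) hj)
  set g : Ω → ℝ := fun x => ∑ i ∈ Finset.Ico (0:ℤ) (n:ℤ), M i x with hgdef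
  have hgint : Integrable g ℙ := by
    rw [hgdef]
    exact integrable_finset_sum _ (fun i _ => hMint i)
  have h0mem : ∀ x : Ω, (0:ℝ) ∈ {D : ℝ | ∃ a b : ℤ × ℤ,
      a.1 ∈ Set.Icc (0 : ℤ) (N : ℤ) ∧ a.2 ∈ Set.Icc (0 : ℤ) (n : ℤ) ∧
      b.1 ∈ Set.Icc (0 : ℤ) (N : ℤ) ∧ b.2 ∈ Set.Icc (0 : ℤ) (n : ℤ) ∧
      a.1 ≤ b.1 ∧ a.2 ≤ b.2 ∧
      D = |semiLPP (interpEnsemble (fun r => ω r x)) (a.1 : ℝ) a.2 (b.1 : ℝ) b.2 -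
            latticeLPP (fun r => ω r x) a b|} := by
    intro x
    refine ⟨(0,0), (0,0), Set.mem_Icc.2 ⟨le_refl _, hNn⟩, Set.mem_Icc.2 ⟨le_refl _, hnn⟩,
      Set.mem_Icc.2 ⟨le_refl _, hNn⟩, Set.mem_Icc.2 ⟨le_refl _, hnn⟩,
      le_refl _, le_refl _, ?_⟩
    show (0:ℝ) = |semiLPP (interpEnsemble (fun r => ω r x)) ((0:ℤ):ℝ) 0 ((0:ℤ):ℝ) 0 -
      latticeLPP (fun r => ω r x) (0,0) (0,0)|
    rw [semi_deg, lattice_deg]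
    simp
  have hub : ∀ x : Ω, ∀ D ∈ {D : ℝ | ∃ a b : ℤ × ℤ,
      a.1 ∈ Set.Icc (0 : ℤ) (N : ℤ) ∧ a.2 ∈ Set.Icc (0 : ℤ) (n : ℤ) ∧
      b.1 ∈ Set.Icc (0 : ℤ) (N : ℤ) ∧ b.2 ∈ Set.Icc (0 : ℤ) (n : ℤ) ∧
      a.1 ≤ b.1 ∧ a.2 ≤ b.2 ∧
      D = |semiLPP (interpEnsemble (fun r => ω r x)) (a.1 : ℝ) a.2 (b.1 : ℝ) b.2 -
            latticeLPP (fun r => ω r x) a b|}, D ≤ g x := by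
    intro x D hD
    obtain ⟨a, b, ha1, ha2, hb1, hb2, hab1, hab2, rfl⟩ := hD
    rw [Set.mem_Icc] at ha1 ha2 hb1 hb2
    have hdet := det (fun r => ω r x) a.1 a.2 b.1 b.2 ha1.1 hab1 hab2
      (fun i => M i x) (fun i => hM0 i x)
      (fun j i hj1 hj2 => hMle j i x (le_trans ha1.1 hj1) (le_trans hj2 hb1.2))
    simp only [Prod.mk.eta] at hdet
    refine le_trans hdet ?_
    rw [hgdef]
    refine Finset.sum_le_sum_of_subset_of_nonneg ?_ (fun i _ _ => hM0 i x)
    intro i hi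
    rw [Finset.mem_Ico] at hi ⊢
    omega
  have hbdd : ∀ x : Ω, BddAbove {D : ℝ | ∃ a b : ℤ × ℤ,
      a.1 ∈ Set.Icc (0 : ℤ) (N : ℤ) ∧ a.2 ∈ Set.Icc (0 : ℤ) (n : ℤ) ∧
      b.1 ∈ Set.Icc (0 : ℤ) (N : ℤ) ∧ b.2 ∈ Set.Icc (0 : ℤ) (n : ℤ) ∧
      a.1 ≤ b.1 ∧ a.2 ≤ b.2 ∧
      D = |semiLPP (interpEnsemble (fun r => ω r x)) (a.1 : ℝ) a.2 (b.1 : ℝ) b.2 -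
            latticeLPP (fun r => ω r x) a b|} :=
    fun x => ⟨g x, fun D hD => hub x D hD⟩
  calc (∫ x, sSup {D : ℝ | ∃ a b : ℤ × ℤ,
        a.1 ∈ Set.Icc (0 : ℤ) (N : ℤ) ∧ a.2 ∈ Set.Icc (0 : ℤ) (n : ℤ) ∧
        b.1 ∈ Set.Icc (0 : ℤ) (N : ℤ) ∧ b.2 ∈ Set.Icc (0 : ℤ) (n : ℤ) ∧
        a.1 ≤ b.1 ∧ a.2 ≤ b.2 ∧
        D = |semiLPP (interpEnsemble (fun r => ω r x)) (a.1 : ℝ) a.2 (b.1 : ℝ) b.2 -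
              latticeLPP (fun r => ω r x) a b|} ∂ℙ)
      ≤ ∫ x, g x ∂ℙ := by
        refine integral_mono_of_nonneg (Filter.Eventually.of_forall (fun x => ?_)) hgint
          (Filter.Eventually.of_forall (fun x => ?_))
        · exact le_csSup (hbdd x) (h0mem x)
        · exact csSup_le ⟨0, h0mem x⟩ (hub x)
  _ = ∑ i ∈ Finset.Ico (0:ℤ) (n:ℤ), ∫ x, M i x ∂ℙ := by
        rw [hgdef]
        exact integral_finset_sum _ (fun i _ => hMint i)
  _ ≤ ∑ _i ∈ Finset.Ico (0:ℤ) (n:ℤ), (((N:ℝ) + 1) * ∫ x, |ω (0,0) x| ^ p ∂ℙ) ^ (1/p) :=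
        Finset.sum_le_sum (fun i _ => hrow i)
  _ = (n : ℝ) * (((N : ℝ) + 1) * ∫ x, |ω (0, 0) x| ^ p ∂ℙ) ^ (1 / p) := by
        rw [Finset.sum_const, Int.card_Ico, nsmul_eq_mul]
        congr 1
end

section
/- Let p > 2, β > 0, ε > 0, and let {ω(a) : a ∈ ℤ²} be i.i.d. real random variables with E|ω(0,0)|^p < ∞; let F be the interpolated ensemble built from ω. Then P( max |L_F(a;b) − L_ω(a;b)| > n^{1 + β/p + ε} ) → 0 as n → ∞, where the maximum is over all pairs a ≤ b of points of ([0, ⌊n^β⌋] × [0, n]) ∩ ℤ². -/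
open MeasureTheory ProbabilityTheory Filter

namespace Stmt4Aux

open Finset

def semiSet (G : ℤ → ℝ → ℝ) (x : ℝ) (m : ℤ) (y : ℝ) (n : ℤ) : Set ℝ :=
  {S : ℝ | ∃ z : ℤ → ℝ,
    z (m - 1) = x ∧ z n = y ∧
    (∀ i j : ℤ, m - 1 ≤ i → i ≤ j → j ≤ n → z i ≤ z j) ∧
    S = ∑ i ∈ Finset.Icc m n, (G i (z i) - G i (z (i - 1)))}

def latSet (w : ℤ × ℤ → ℝ) (a b : ℤ × ℤ) : Set ℝ :=
  {S : ℝ | ∃ (N : ℕ) (π : ℕ → ℤ × ℤ),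
    π 0 = a ∧ (π N = b - (1, 0) ∨ π N = b - (0, 1)) ∧
    (∀ k < N, π (k + 1) - π k = (1, 0) ∨ π (k + 1) - π k = (0, 1)) ∧
    S = ∑ k ∈ Finset.range (N + 1), w (π k)}

lemma semiLPP_eq (G : ℤ → ℝ → ℝ) (x : ℝ) (m : ℤ) (y : ℝ) (n : ℤ) :
    semiLPP G x m y n = sSup (semiSet G x m y n) := rfl

lemma latticeLPP_eq (w : ℤ × ℤ → ℝ) (a b : ℤ × ℤ) :
    latticeLPP w a b = sSup (latSet w a b) := rfl

lemma Icc_insert_left {a b : ℤ} (h : a ≤ b) :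
    Finset.Icc a b = insert a (Finset.Icc (a+1) b) := by
  ext k; simp only [Finset.mem_Icc, Finset.mem_insert]; omega

lemma sum_Icc_split {a b : ℤ} (h : a ≤ b) (f : ℤ → ℝ) :
    ∑ i ∈ Finset.Icc a b, f i = f a + ∑ i ∈ Finset.Icc (a+1) b, f i := by
  rw [Icc_insert_left h, Finset.sum_insert (by simp)]

lemma interp_int (w : ℤ × ℤ → ℝ) (i u : ℤ) :
    interpEnsemble w i (u:ℝ) = ∑ j ∈ Finset.Ico 0 u, w (j, i) := by
  simp [interpEnsemble, Int.floor_intCast]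

lemma sum_Ico_split {u v t : ℤ} (h1 : u ≤ v) (h2 : v ≤ t) (f : ℤ → ℝ) :
    ∑ j ∈ Finset.Ico u t, f j = ∑ j ∈ Finset.Ico u v, f j + ∑ j ∈ Finset.Ico v t, f j := by
  rw [← Finset.Ico_union_Ico_eq_Ico h1 h2,
    Finset.sum_union (Finset.Ico_disjoint_Ico_consecutive _ _ _)]

lemma interp_diff (w : ℤ × ℤ → ℝ) (i : ℤ) {u v : ℤ} (hu : 0 ≤ u) (huv : u ≤ v) :
    interpEnsemble w i (v:ℝ) - interpEnsemble w i (u:ℝ) = ∑ j ∈ Finset.Ico u v, w (j, i) := by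
  rw [interp_int, interp_int, sum_Ico_split hu huv]
  ring

lemma interp_step (w : ℤ × ℤ → ℝ) (i : ℤ) {u : ℤ} (hu : 0 ≤ u) :
    interpEnsemble w i ((u:ℝ)+1) - interpEnsemble w i (u:ℝ) = w (u, i) := by
  have h := interp_diff w i hu (by omega : u ≤ u + 1)
  push_cast at h
  have h2 : Finset.Ico u (u+1) = {u} := by ext k; simp only [Finset.mem_Ico, Finset.mem_singleton]; omega
  rw [h, h2, Finset.sum_singleton]

section Det

variable {w : ℤ × ℤ → ℝ} {K : ℤ} {M : ℤ → ℝ}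

lemma interp_row_le (hM0 : ∀ i, 0 ≤ M i)
    (hM : ∀ i j, 0 ≤ j → j ≤ K → |w (j,i)| ≤ M i)
    (i : ℤ) {u v : ℝ} (hu : 0 ≤ u) (huv : u ≤ v) (hv : v ≤ (K:ℝ)) :
    interpEnsemble w i v - interpEnsemble w i u ≤
      (∑ j ∈ Finset.Ico ⌊u⌋ ⌊v⌋, w (j,i)) + 2 * M i := by
  have h0u : 0 ≤ ⌊u⌋ := Int.floor_nonneg.2 hu
  have huv' : ⌊u⌋ ≤ ⌊v⌋ := Int.floor_le_floor huv
  have hvK : ⌊v⌋ ≤ K := by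
    have := Int.floor_le_floor hv
    rwa [Int.floor_intCast] at this
  have hsplit : ∑ j ∈ Finset.Ico 0 ⌊v⌋, w (j,i)
      = ∑ j ∈ Finset.Ico 0 ⌊u⌋, w (j,i) + ∑ j ∈ Finset.Ico ⌊u⌋ ⌊v⌋, w (j,i) :=
    sum_Ico_split h0u huv' (fun j => w (j,i))
  have hfv0 : 0 ≤ v - ⌊v⌋ := sub_nonneg.2 (Int.floor_le v)
  have hfv1 : v - ⌊v⌋ ≤ 1 := by linarith [Int.lt_floor_add_one v]
  have hfu0 : 0 ≤ u - ⌊u⌋ := sub_nonneg.2 (Int.floor_le u)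
  have hfu1 : u - ⌊u⌋ ≤ 1 := by linarith [Int.lt_floor_add_one u]
  have hMv : |w (⌊v⌋, i)| ≤ M i := hM i ⌊v⌋ (by omega) hvK
  have hMu : |w (⌊u⌋, i)| ≤ M i := hM i ⌊u⌋ h0u (by omega)
  have b1 : (v - ⌊v⌋) * w (⌊v⌋, i) ≤ M i := by
    calc (v - ⌊v⌋) * w (⌊v⌋, i) ≤ (v - ⌊v⌋) * |w (⌊v⌋, i)| :=
          mul_le_mul_of_nonneg_left (le_abs_self _) hfv0
      _ ≤ 1 * |w (⌊v⌋, i)| := mul_le_mul_of_nonneg_right hfv1 (abs_nonneg _)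
      _ ≤ M i := by rw [one_mul]; exact hMv
  have b2 : -((u - ⌊u⌋) * w (⌊u⌋, i)) ≤ M i := by
    calc -((u - ⌊u⌋) * w (⌊u⌋, i)) = (u - ⌊u⌋) * (-w (⌊u⌋, i)) := by ring
      _ ≤ (u - ⌊u⌋) * |w (⌊u⌋, i)| := mul_le_mul_of_nonneg_left (neg_le_abs _) hfu0
      _ ≤ 1 * |w (⌊u⌋, i)| := mul_le_mul_of_nonneg_right hfu1 (abs_nonneg _)
      _ ≤ M i := by rw [one_mul]; exact hMu
  unfold interpEnsemble
  rw [hsplit]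
  linarith


lemma semiSet_nonempty (G : ℤ → ℝ → ℝ) {x y : ℝ} {m n : ℤ} (hmn : m ≤ n) (hxy : x ≤ y) :
    (semiSet G x m y n).Nonempty := by
  refine ⟨_, ⟨fun i => if i < n then x else y, ?_, ?_, ?_, rfl⟩⟩
  · show (if m - 1 < n then x else y) = x
    rw [if_pos (by omega)]
  · show (if n < n then x else y) = y
    rw [if_neg (by omega)]
  · intro i j _ hij _
    show (if i < n then x else y) ≤ (if j < n then x else y)
    by_cases hj : j < n
    · rw [if_pos (by omega : i < n), if_pos hj]
    · rw [if_neg hj]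
      by_cases hi : i < n
      · rw [if_pos hi]; exact hxy
      · rw [if_neg hi]

lemma chain_mem {z : ℤ → ℝ} {x y : ℝ} {m n : ℤ}
    (hz1 : z (m-1) = x) (hz2 : z n = y)
    (hz3 : ∀ i j : ℤ, m - 1 ≤ i → i ≤ j → j ≤ n → z i ≤ z j)
    {j : ℤ} (h1 : m - 1 ≤ j) (h2 : j ≤ n) : x ≤ z j ∧ z j ≤ y := by
  constructor
  · rw [← hz1]; exact hz3 (m-1) j le_rfl h1 h2
  · rw [← hz2]; exact hz3 j n h1 h2 le_rfl

lemma semiSet_bddAbove (hM0 : ∀ i, 0 ≤ M i)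
    (hM : ∀ i j, 0 ≤ j → j ≤ K → |w (j,i)| ≤ M i)
    {a1 b1 m n : ℤ} (h0 : 0 ≤ a1) (hbK : b1 ≤ K) :
    BddAbove (semiSet (interpEnsemble w) (a1:ℝ) m (b1:ℝ) n) := by
  refine ⟨∑ i ∈ Finset.Icc m n, (((b1 - a1 : ℤ):ℝ) + 2) * M i, ?_⟩
  rintro S ⟨z, hz1, hz2, hz3, rfl⟩
  apply Finset.sum_le_sum
  intro i hi
  rw [Finset.mem_Icc] at hi
  have hzi := chain_mem hz1 hz2 hz3 (j := i) (by omega) (by omega)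
  have hzi1 := chain_mem hz1 hz2 hz3 (j := i - 1) (by omega) (by omega)
  have hu0 : (0:ℝ) ≤ z (i-1) := le_trans (by exact_mod_cast h0) hzi1.1
  have huv : z (i-1) ≤ z i := hz3 (i-1) i (by omega) (by omega) (by omega)
  have hvK : z i ≤ (K:ℝ) := le_trans hzi.2 (by exact_mod_cast hbK)
  refine le_trans (interp_row_le hM0 hM i hu0 huv hvK) ?_
  have hlo : a1 ≤ ⌊z (i-1)⌋ := by
    have := Int.floor_le_floor hzi1.1
    rwa [Int.floor_intCast] at this
  have hhi : ⌊z i⌋ ≤ b1 := by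
    have := Int.floor_le_floor hzi.2
    rwa [Int.floor_intCast] at this
  have hcard : ∑ j ∈ Finset.Ico ⌊z (i-1)⌋ ⌊z i⌋, w (j, i) ≤ ((b1 - a1 : ℤ):ℝ) * M i := by
    calc ∑ j ∈ Finset.Ico ⌊z (i-1)⌋ ⌊z i⌋, w (j, i)
        ≤ ∑ j ∈ Finset.Ico ⌊z (i-1)⌋ ⌊z i⌋, M i := by
          apply Finset.sum_le_sum
          intro j hj
          rw [Finset.mem_Ico] at hj
          exact le_trans (le_abs_self _) (hM i j (by omega) (by omega))
      _ = ((Finset.Ico ⌊z (i-1)⌋ ⌊z i⌋).card : ℝ) * M i := by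
          rw [Finset.sum_const, nsmul_eq_mul]
      _ ≤ ((b1 - a1 : ℤ):ℝ) * M i := by
          apply mul_le_mul_of_nonneg_right _ (hM0 i)
          rw [Int.card_Ico]
          have hfl : ⌊z (i-1)⌋ ≤ ⌊z i⌋ := Int.floor_le_floor huv
          have : ((⌊z i⌋ - ⌊z (i-1)⌋).toNat : ℤ) ≤ b1 - a1 := by omega
          exact_mod_cast this
  linarith [hM0 i]

lemma semiSet_diag (G : ℤ → ℝ → ℝ) (a1 m : ℤ) :
    semiSet G (a1:ℝ) m (a1:ℝ) m = {0} := by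
  ext S
  simp only [Set.mem_singleton_iff]
  constructor
  · rintro ⟨z, hz1, hz2, _, rfl⟩
    rw [Finset.Icc_self, Finset.sum_singleton]
    have : z (m-1) = z m := by rw [hz1, hz2]
    rw [this, sub_self]
  · rintro rfl
    refine ⟨fun _ => (a1:ℝ), rfl, rfl, fun _ _ _ _ _ => le_rfl, ?_⟩
    rw [Finset.Icc_self, Finset.sum_singleton, sub_self]

lemma path_mono {N : ℕ} {π : ℕ → ℤ × ℤ}
    (hinc : ∀ k < N, π (k + 1) - π k = ((1:ℤ), (0:ℤ)) ∨ π (k + 1) - π k = (0, 1)) :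
    ∀ {k l : ℕ}, k ≤ l → l ≤ N → (π k).1 ≤ (π l).1 ∧ (π k).2 ≤ (π l).2 := by
  intro k l hkl hlN
  induction l with
  | zero =>
    have : k = 0 := Nat.le_zero.1 hkl
    subst this; exact ⟨le_rfl, le_rfl⟩
  | succ l ih =>
    rcases Nat.eq_or_lt_of_le hkl with h | h
    · subst h; exact ⟨le_rfl, le_rfl⟩
    · have hkl' : k ≤ l := by omega
      have ihl := ih hkl' (by omega)
      rcases hinc l (by omega) with h1 | h1 <;>
      · have e1 : (π (l+1)).1 - (π l).1 = _ := congrArg Prod.fst h1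
        have e2 : (π (l+1)).2 - (π l).2 = _ := congrArg Prod.snd h1
        simp only at e1 e2
        constructor <;> omega

lemma path_csum {N : ℕ} {π : ℕ → ℤ × ℤ} {a : ℤ × ℤ} (h0 : π 0 = a)
    (hinc : ∀ k < N, π (k + 1) - π k = ((1:ℤ), (0:ℤ)) ∨ π (k + 1) - π k = (0, 1)) :
    ∀ k, k ≤ N → (π k).1 + (π k).2 = a.1 + a.2 + k := by
  intro k
  induction k with
  | zero => intro _; rw [h0]; simp
  | succ k ih =>
    intro hk
    have ihk := ih (by omega)
    rcases hinc k (by omega) with h1 | h1 <;>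
    · have e1 : (π (k+1)).1 - (π k).1 = _ := congrArg Prod.fst h1
      have e2 : (π (k+1)).2 - (π k).2 = _ := congrArg Prod.snd h1
      simp only at e1 e2
      push_cast
      omega

lemma latSet_bddAbove (hM0 : ∀ i, 0 ≤ M i)
    (hM : ∀ i j, 0 ≤ j → j ≤ K → |w (j,i)| ≤ M i)
    {a b : ℤ × ℤ} (h0 : 0 ≤ a.1) (hbK : b.1 ≤ K) :
    BddAbove (latSet w a b) := by
  refine ⟨((b.1 + b.2 - a.1 - a.2 : ℤ):ℝ) * ∑ i ∈ Finset.Icc a.2 b.2, M i, ?_⟩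
  rintro S ⟨N, π, hπ0, hπN, hinc, rfl⟩
  have hcs := path_csum hπ0 hinc N le_rfl
  have hNval : (N:ℤ) + 1 = b.1 + b.2 - a.1 - a.2 := by
    rcases hπN with h | h <;>
    · rw [h] at hcs
      simp at hcs
      omega
  have hterm : ∀ k ∈ Finset.range (N+1), w (π k) ≤ ∑ i ∈ Finset.Icc a.2 b.2, M i := by
    intro k hk
    rw [Finset.mem_range] at hk
    have hlo := path_mono hinc (Nat.zero_le k) (by omega)
    rw [hπ0] at hlo
    have hhi := path_mono hinc (show k ≤ N by omega) le_rfl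
    have hhi2 : (π k).1 ≤ b.1 ∧ (π k).2 ≤ b.2 := by
      rcases hπN with h | h <;>
      · rw [h] at hhi
        simp at hhi
        constructor <;> omega
    have hw : |w (π k)| ≤ M ((π k).2) := by
      have := hM ((π k).2) ((π k).1) (by omega) (by omega)
      rwa [Prod.mk.eta] at this
    refine le_trans (le_trans (le_abs_self _) hw) ?_
    apply Finset.single_le_sum (fun i _ => hM0 i)
    rw [Finset.mem_Icc]
    exact ⟨hlo.2, hhi2.2⟩
  calc ∑ k ∈ Finset.range (N+1), w (π k)
      ≤ ∑ _k ∈ Finset.range (N+1), ∑ i ∈ Finset.Icc a.2 b.2, M i :=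
        Finset.sum_le_sum hterm
    _ = ((N:ℝ) + 1) * ∑ i ∈ Finset.Icc a.2 b.2, M i := by
        rw [Finset.sum_const, Finset.card_range, nsmul_eq_mul]; push_cast; ring
    _ = ((b.1 + b.2 - a.1 - a.2 : ℤ):ℝ) * ∑ i ∈ Finset.Icc a.2 b.2, M i := by
        congr 1
        exact_mod_cast hNval

lemma latSet_diag (a : ℤ × ℤ) : latSet w a a = ∅ := by
  ext S
  simp only [Set.mem_empty_iff_false, iff_false]
  rintro ⟨N, π, hπ0, hπN, hinc, -⟩
  have := path_mono hinc (Nat.zero_le N) le_rfl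
  rw [hπ0] at this
  rcases hπN with h | h <;>
  · rw [h] at this
    simp at this

lemma latSet_prepend {a b e : ℤ × ℤ} (he : e = ((1:ℤ), (0:ℤ)) ∨ e = (0, 1)) {s : ℝ}
    (hs : s ∈ latSet w (a + e) b) : w a + s ∈ latSet w a b := by
  obtain ⟨N, π, h0, hN, hinc, rfl⟩ := hs
  refine ⟨N + 1, fun k => if k = 0 then a else π (k - 1), by simp, ?_, ?_, ?_⟩
  · have hN1 : (fun k => if k = 0 then a else π (k - 1)) (N + 1) = π N := by
      show (if N + 1 = 0 then a else π (N + 1 - 1)) = π N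
      rw [if_neg (Nat.succ_ne_zero N)]
      congr 1
    rw [hN1]
    exact hN
  · intro k hk
    have e1 : (fun k => if k = 0 then a else π (k - 1)) (k + 1) = π k := by
      show (if k + 1 = 0 then a else π (k + 1 - 1)) = π k
      rw [if_neg (Nat.succ_ne_zero k)]
      congr 1
    rcases Nat.eq_zero_or_pos k with rfl | hkpos
    · have e2 : (fun k => if k = 0 then a else π (k - 1)) 0 = a := by
        show (if (0:ℕ) = 0 then a else π (0 - 1)) = a
        rw [if_pos rfl]
      rw [e1, e2, h0, add_sub_cancel_left]
      exact he
    · have e2 : (fun k' => if k' = 0 then a else π (k' - 1)) k = π (k - 1) := by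
        show (if k = 0 then a else π (k - 1)) = π (k - 1)
        rw [if_neg hkpos.ne']
      rw [e1, e2]
      have := hinc (k - 1) (by omega)
      rwa [show k - 1 + 1 = k by omega] at this
  · rw [Finset.sum_range_succ' (fun k => w (if k = 0 then a else π (k - 1))) (N + 1)]
    simp only [Nat.add_sub_cancel]
    norm_num
    ring

lemma semi_step_h (hM0 : ∀ i, 0 ≤ M i)
    (hM : ∀ i j, 0 ≤ j → j ≤ K → |w (j,i)| ≤ M i)
    {a1 a2 b1 b2 : ℤ} (h0 : 0 ≤ a1) (h1 : a1 + 1 ≤ b1) (h2 : a2 ≤ b2) (hbK : b1 ≤ K) :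
    w (a1, a2) + semiLPP (interpEnsemble w) ((a1:ℝ)+1) a2 (b1:ℝ) b2 ≤
      semiLPP (interpEnsemble w) (a1:ℝ) a2 (b1:ℝ) b2 := by
  rw [semiLPP_eq, semiLPP_eq]
  have hcast : ((a1:ℝ)+1) = ((a1+1 : ℤ):ℝ) := by push_cast; ring
  have hne : (semiSet (interpEnsemble w) ((a1:ℝ)+1) a2 (b1:ℝ) b2).Nonempty := by
    rw [hcast]
    exact semiSet_nonempty _ h2 (by exact_mod_cast h1)
  have key : ∀ S' ∈ semiSet (interpEnsemble w) ((a1:ℝ)+1) a2 (b1:ℝ) b2,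
      S' ≤ sSup (semiSet (interpEnsemble w) (a1:ℝ) a2 (b1:ℝ) b2) - w (a1, a2) := by
    rintro S' ⟨z, hz1, hz2, hz3, rfl⟩
    rw [le_sub_iff_add_le]
    have hmem : (∑ i ∈ Finset.Icc a2 b2,
        (interpEnsemble w i (z i) - interpEnsemble w i (z (i-1)))) + w (a1,a2)
        ∈ semiSet (interpEnsemble w) (a1:ℝ) a2 (b1:ℝ) b2 := by
      refine ⟨fun i => if i = a2 - 1 then (a1:ℝ) else z i, ?_, ?_, ?_, ?_⟩
      · show (if a2 - 1 = a2 - 1 then (a1:ℝ) else z (a2-1)) = (a1:ℝ)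
        rw [if_pos rfl]
      · show (if b2 = a2 - 1 then (a1:ℝ) else z b2) = (b1:ℝ)
        rw [if_neg (by omega), hz2]
      · intro i j hi hij hj
        show (if i = a2 - 1 then (a1:ℝ) else z i) ≤ (if j = a2 - 1 then (a1:ℝ) else z j)
        by_cases hi' : i = a2 - 1
        · rw [if_pos hi']
          by_cases hj' : j = a2 - 1
          · rw [if_pos hj']
          · rw [if_neg hj']
            have hzj : ((a1:ℝ)+1) ≤ z j := by
              rw [← hz1]; exact hz3 (a2-1) j le_rfl (by omega) hj
            linarith
        · rw [if_neg hi', if_neg (by omega)]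
          exact hz3 i j hi hij hj
      · simp only []
        rw [sum_Icc_split h2 (fun i => interpEnsemble w i (if i = a2 - 1 then (a1:ℝ) else z i)
            - interpEnsemble w i (if i - 1 = a2 - 1 then (a1:ℝ) else z (i - 1)))]
        rw [sum_Icc_split h2 (fun i => interpEnsemble w i (z i) - interpEnsemble w i (z (i-1)))]
        have htail : ∑ i ∈ Finset.Icc (a2+1) b2,
            (interpEnsemble w i (if i = a2 - 1 then (a1:ℝ) else z i)
              - interpEnsemble w i (if i - 1 = a2 - 1 then (a1:ℝ) else z (i - 1)))
            = ∑ i ∈ Finset.Icc (a2+1) b2,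
            (interpEnsemble w i (z i) - interpEnsemble w i (z (i-1))) := by
          apply Finset.sum_congr rfl
          intro i hi
          rw [Finset.mem_Icc] at hi
          rw [if_neg (by omega), if_neg (by omega)]
        rw [htail]
        rw [if_neg (by omega : ¬ a2 = a2 - 1), if_pos rfl, hz1]
        have hstep := interp_step w a2 h0
        linarith
    exact le_csSup (semiSet_bddAbove hM0 hM h0 hbK) hmem
  have := csSup_le hne key
  linarith

lemma semi_step_v (hM0 : ∀ i, 0 ≤ M i)
    (hM : ∀ i j, 0 ≤ j → j ≤ K → |w (j,i)| ≤ M i)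
    {a1 a2 b1 b2 : ℤ} (h0 : 0 ≤ a1) (h1 : a1 ≤ b1) (h2 : a2 + 1 ≤ b2) (hbK : b1 ≤ K) :
    semiLPP (interpEnsemble w) (a1:ℝ) (a2+1) (b1:ℝ) b2 ≤
      semiLPP (interpEnsemble w) (a1:ℝ) a2 (b1:ℝ) b2 := by
  rw [semiLPP_eq, semiLPP_eq]
  have hne : (semiSet (interpEnsemble w) (a1:ℝ) (a2+1) (b1:ℝ) b2).Nonempty :=
    semiSet_nonempty _ h2 (by exact_mod_cast h1)
  apply csSup_le hne
  rintro S' ⟨z, hz1, hz2, hz3, rfl⟩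
  have hz1' : z a2 = (a1:ℝ) := by rwa [show a2 + 1 - 1 = a2 by omega] at hz1
  have hmem : (∑ i ∈ Finset.Icc (a2+1) b2,
      (interpEnsemble w i (z i) - interpEnsemble w i (z (i-1))))
      ∈ semiSet (interpEnsemble w) (a1:ℝ) a2 (b1:ℝ) b2 := by
    refine ⟨fun i => if i ≤ a2 - 1 then (a1:ℝ) else z i, ?_, ?_, ?_, ?_⟩
    · show (if a2 - 1 ≤ a2 - 1 then (a1:ℝ) else z (a2-1)) = (a1:ℝ)
      rw [if_pos le_rfl]
    · show (if b2 ≤ a2 - 1 then (a1:ℝ) else z b2) = (b1:ℝ)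
      rw [if_neg (by omega), hz2]
    · intro i j hi hij hj
      show (if i ≤ a2 - 1 then (a1:ℝ) else z i) ≤ (if j ≤ a2 - 1 then (a1:ℝ) else z j)
      by_cases hi' : i ≤ a2 - 1
      · rw [if_pos hi']
        by_cases hj' : j ≤ a2 - 1
        · rw [if_pos hj']
        · rw [if_neg hj']
          rw [← hz1']
          exact hz3 a2 j (by omega) (by omega) hj
      · rw [if_neg hi', if_neg (by omega)]
        exact hz3 i j (by omega) hij hj
    · simp only []
      rw [sum_Icc_split (by omega : a2 ≤ b2) (fun i =>
          interpEnsemble w i (if i ≤ a2 - 1 then (a1:ℝ) else z i)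
          - interpEnsemble w i (if i - 1 ≤ a2 - 1 then (a1:ℝ) else z (i - 1)))]
      have htail : ∑ i ∈ Finset.Icc (a2+1) b2,
          (interpEnsemble w i (if i ≤ a2 - 1 then (a1:ℝ) else z i)
            - interpEnsemble w i (if i - 1 ≤ a2 - 1 then (a1:ℝ) else z (i - 1)))
          = ∑ i ∈ Finset.Icc (a2+1) b2,
          (interpEnsemble w i (z i) - interpEnsemble w i (z (i-1))) := by
        apply Finset.sum_congr rfl
        intro i hi
        rw [Finset.mem_Icc] at hi
        rw [if_neg (by omega), if_neg (by omega)]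
      rw [htail, if_neg (by omega : ¬ a2 ≤ a2 - 1), if_pos (le_rfl : a2 - 1 ≤ a2 - 1), hz1']
      ring
  exact le_csSup (semiSet_bddAbove hM0 hM h0 hbK) hmem


lemma semi_base_h (hM0 : ∀ i, 0 ≤ M i)
    (hM : ∀ i j, 0 ≤ j → j ≤ K → |w (j,i)| ≤ M i)
    {a1 : ℤ} (a2 : ℤ) (h0 : 0 ≤ a1) (hbK : a1 + 1 ≤ K) :
    w (a1, a2) ≤ semiLPP (interpEnsemble w) (a1:ℝ) a2 ((a1+1 : ℤ):ℝ) a2 := by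
  rw [semiLPP_eq]
  apply le_csSup (semiSet_bddAbove hM0 hM h0 hbK)
  refine ⟨fun i => if i ≤ a2 - 1 then (a1:ℝ) else ((a1+1 : ℤ):ℝ), ?_, ?_, ?_, ?_⟩
  · show (if a2 - 1 ≤ a2 - 1 then (a1:ℝ) else ((a1+1 : ℤ):ℝ)) = (a1:ℝ)
    rw [if_pos le_rfl]
  · show (if a2 ≤ a2 - 1 then (a1:ℝ) else ((a1+1 : ℤ):ℝ)) = ((a1+1 : ℤ):ℝ)
    rw [if_neg (by omega)]
  · intro i j _ hij _
    show (if i ≤ a2 - 1 then (a1:ℝ) else ((a1+1 : ℤ):ℝ)) ≤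
      (if j ≤ a2 - 1 then (a1:ℝ) else ((a1+1 : ℤ):ℝ))
    have hle : (a1:ℝ) ≤ ((a1+1 : ℤ):ℝ) := by push_cast; linarith
    by_cases hj : j ≤ a2 - 1
    · rw [if_pos (by omega : i ≤ a2 - 1), if_pos hj]
    · rw [if_neg hj]
      by_cases hi : i ≤ a2 - 1
      · rw [if_pos hi]; exact hle
      · rw [if_neg hi]
  · simp only []
    rw [Finset.Icc_self, Finset.sum_singleton,
      if_neg (by omega : ¬ a2 ≤ a2 - 1), if_pos (le_rfl : a2 - 1 ≤ a2 - 1)]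
    have := interp_step w a2 h0
    push_cast
    push_cast at this
    linarith

lemma semi_base_v (hM0 : ∀ i, 0 ≤ M i)
    (hM : ∀ i j, 0 ≤ j → j ≤ K → |w (j,i)| ≤ M i)
    {a1 : ℤ} (a2 : ℤ) (h0 : 0 ≤ a1) (hbK : a1 ≤ K) :
    (0:ℝ) ≤ semiLPP (interpEnsemble w) (a1:ℝ) a2 (a1:ℝ) (a2+1) := by
  rw [semiLPP_eq]
  apply le_csSup (semiSet_bddAbove hM0 hM h0 hbK)
  refine ⟨fun _ => (a1:ℝ), rfl, rfl, fun _ _ _ _ _ => le_rfl, ?_⟩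
  rw [Finset.sum_eq_zero]
  intro i _
  exact sub_self _

lemma ladder (hM0 : ∀ i, 0 ≤ M i)
    (hM : ∀ i j, 0 ≤ j → j ≤ K → |w (j,i)| ≤ M i) :
    ∀ (d : ℕ) (a b : ℤ × ℤ) (y : ℤ → ℤ),
      b.1 - a.1 + (b.2 - a.2) = d → a ≠ b → a.1 ≤ b.1 → a.2 ≤ b.2 → 0 ≤ a.1 → b.1 ≤ K →
      y (a.2 - 1) = a.1 → y b.2 = b.1 →
      (∀ i j, a.2 - 1 ≤ i → i ≤ j → j ≤ b.2 → y i ≤ y j) →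
      ∃ s ∈ latSet w a b,
        (∑ i ∈ Finset.Icc a.2 b.2, ∑ j ∈ Finset.Ico (y (i-1)) (y i), w (j, i)) ≤
          s + ∑ i ∈ Finset.Icc a.2 b.2, M i := by
  intro d
  induction d with
  | zero =>
    intro a b y hd hne h1 h2 _ _ _ _ _
    exfalso
    apply hne
    push_cast at hd
    apply Prod.ext <;> omega
  | succ d ih =>
    intro a b y hd hne h1 h2 h0 hbK hy1 hy2 hmono
    push_cast at hd
    by_cases hbe1 : b = a + (1, 0)
    · refine ⟨w a, ⟨0, fun _ => a, rfl, Or.inl (by rw [hbe1]; simp [Prod.ext_iff]),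
        fun k hk => absurd hk (by omega), by simp⟩, ?_⟩
      have hb1 : b.1 = a.1 + 1 := by rw [hbe1]; simp
      have hb2 : b.2 = a.2 := by rw [hbe1]; simp
      rw [hb2, Finset.Icc_self, Finset.sum_singleton, Finset.sum_singleton]
      have hya : y a.2 = a.1 + 1 := by rw [← hb1, ← hy2, hb2]
      rw [hy1, hya]
      have hico : Finset.Ico a.1 (a.1+1) = {a.1} := by
        ext k; simp only [Finset.mem_Ico, Finset.mem_singleton]; omega
      rw [hico, Finset.sum_singleton, Prod.mk.eta]
      linarith [hM0 a.2]
    · by_cases hbe2 : b = a + (0, 1)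
      · refine ⟨w a, ⟨0, fun _ => a, rfl, Or.inr (by rw [hbe2]; simp [Prod.ext_iff]),
          fun k hk => absurd hk (by omega), by simp⟩, ?_⟩
        have hb1 : b.1 = a.1 := by rw [hbe2]; simp
        have hb2 : b.2 = a.2 + 1 := by rw [hbe2]; simp
        have hG : (∑ i ∈ Finset.Icc a.2 b.2, ∑ j ∈ Finset.Ico (y (i-1)) (y i), w (j, i)) = 0 := by
          apply Finset.sum_eq_zero
          intro i hi
          rw [Finset.mem_Icc] at hi
          have l1 : a.1 ≤ y (i-1) := by
            rw [← hy1]; exact hmono _ _ le_rfl (by omega) (by omega)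
          have l2 : y i ≤ a.1 := by
            rw [← hb1, ← hy2]; exact hmono _ _ (by omega) (by omega) le_rfl
          have l3 : y (i-1) ≤ y i := hmono _ _ (by omega) (by omega) (by omega)
          have : y (i-1) = y i := by omega
          rw [this, Finset.Ico_self, Finset.sum_empty]
        rw [hG]
        have hwa : -M a.2 ≤ w a := by
          have h1' := hM a.2 a.1 h0 (by omega)
          rw [Prod.mk.eta] at h1'
          have h2' := neg_abs_le (w a)
          linarith
        have hsum : M a.2 ≤ ∑ i ∈ Finset.Icc a.2 b.2, M i :=
          Finset.single_le_sum (fun i _ => hM0 i) (by rw [Finset.mem_Icc]; omega)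
        linarith
      · have hy0 : a.1 ≤ y a.2 := by
          rw [← hy1]; exact hmono _ _ le_rfl (by omega) (by omega)
        by_cases hstep : a.1 + 1 ≤ y a.2
        · -- horizontal consume
          have hyb : y a.2 ≤ b.1 := by rw [← hy2]; exact hmono _ _ (by omega) h2 le_rfl
          have hy1b : a.1 + 1 ≤ b.1 := by omega
          set y' : ℤ → ℤ := fun i => if i = a.2 - 1 then a.1 + 1 else y i with hy'def
          have hy1' : y' (a.2 - 1) = a.1 + 1 := by
            show (if a.2 - 1 = a.2 - 1 then a.1 + 1 else y (a.2-1)) = a.1 + 1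
            rw [if_pos rfl]
          have hy2' : y' b.2 = b.1 := by
            show (if b.2 = a.2 - 1 then a.1 + 1 else y b.2) = b.1
            rw [if_neg (by omega), hy2]
          have hyi : ∀ i, a.2 ≤ i → y' i = y i := by
            intro i hi
            show (if i = a.2 - 1 then a.1 + 1 else y i) = y i
            rw [if_neg (by omega)]
          have hmono' : ∀ i j, a.2 - 1 ≤ i → i ≤ j → j ≤ b.2 → y' i ≤ y' j := by
            intro i j hi hij hj
            by_cases hi' : i = a.2 - 1
            · rw [hi', hy1']
              by_cases hj' : j = a.2 - 1
              · rw [hj', hy1']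
              · rw [hyi j (by omega)]
                have := hmono a.2 j (by omega) (by omega) hj
                omega
            · rw [hyi i (by omega), hyi j (by omega)]
              exact hmono i j hi hij hj
          obtain ⟨s', hs', hG'⟩ := ih (a.1 + 1, a.2) b y'
            (by show b.1 - (a.1+1) + (b.2 - a.2) = (d:ℤ); omega)
            (fun hcon => hbe1 (by rw [← hcon]; simp [Prod.ext_iff]))
            (by show a.1 + 1 ≤ b.1; omega) (by show a.2 ≤ b.2; exact h2)
            (by show 0 ≤ a.1 + 1; omega) hbK
            (by show y' (a.2 - 1) = a.1 + 1; exact hy1') (by show y' b.2 = b.1; exact hy2')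
            (by intro i j hi hij hj; exact hmono' i j hi hij hj)
          have hG'' : (∑ i ∈ Finset.Icc a.2 b.2, ∑ j ∈ Finset.Ico (y' (i-1)) (y' i), w (j, i)) ≤
              s' + ∑ i ∈ Finset.Icc a.2 b.2, M i := hG'
          have hmem : w a + s' ∈ latSet w a b := by
            apply latSet_prepend (Or.inl rfl)
            rw [show a + ((1:ℤ),(0:ℤ)) = (a.1 + 1, a.2) from by simp [Prod.ext_iff]]
            exact hs'
          refine ⟨w a + s', hmem, ?_⟩
          rw [sum_Icc_split h2 (fun i => ∑ j ∈ Finset.Ico (y (i-1)) (y i), w (j, i))]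
          rw [sum_Icc_split h2 (fun i => ∑ j ∈ Finset.Ico (y' (i-1)) (y' i), w (j, i))] at hG''
          have htail : ∑ i ∈ Finset.Icc (a.2+1) b.2, ∑ j ∈ Finset.Ico (y' (i-1)) (y' i), w (j, i)
              = ∑ i ∈ Finset.Icc (a.2+1) b.2, ∑ j ∈ Finset.Ico (y (i-1)) (y i), w (j, i) := by
            apply Finset.sum_congr rfl
            intro i hi
            rw [Finset.mem_Icc] at hi
            rw [hyi i (by omega), hyi (i-1) (by omega)]
          rw [htail] at hG''
          have hhead : ∑ j ∈ Finset.Ico (y (a.2-1)) (y a.2), w (j, a.2)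
              = w a + ∑ j ∈ Finset.Ico (y' (a.2-1)) (y' a.2), w (j, a.2) := by
            rw [hy1, hy1', hyi a.2 le_rfl]
            rw [sum_Ico_split (by omega : a.1 ≤ a.1 + 1) hstep (fun j => w (j, a.2))]
            have hico : Finset.Ico a.1 (a.1+1) = {a.1} := by
              ext k; simp only [Finset.mem_Ico, Finset.mem_singleton]; omega
            rw [hico, Finset.sum_singleton, Prod.mk.eta]
          rw [hhead]
          linarith
        · -- vertical consume
          have hya : y a.2 = a.1 := by omega
          have ha2b2 : a.2 < b.2 := by
            rcases eq_or_lt_of_le h2 with he | hlt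
            · exfalso
              apply hne
              have hb1 : b.1 = a.1 := by rw [← hy2, ← he, hya]
              apply Prod.ext <;> omega
            · exact hlt
          obtain ⟨s', hs', hG'⟩ := ih (a.1, a.2 + 1) b y
            (by show b.1 - a.1 + (b.2 - (a.2+1)) = (d:ℤ); omega)
            (fun hcon => hbe2 (by rw [← hcon]; simp [Prod.ext_iff]))
            (by show a.1 ≤ b.1; exact h1) (by show a.2 + 1 ≤ b.2; omega)
            (by show 0 ≤ a.1; exact h0) hbK
            (by show y (a.2 + 1 - 1) = a.1; rw [show a.2 + 1 - 1 = a.2 by omega, hya])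
            (by show y b.2 = b.1; exact hy2)
            (by intro i j hi hij hj; exact hmono i j (by omega) hij hj)
          have hG'' : (∑ i ∈ Finset.Icc (a.2+1) b.2, ∑ j ∈ Finset.Ico (y (i-1)) (y i), w (j, i)) ≤
              s' + ∑ i ∈ Finset.Icc (a.2+1) b.2, M i := hG'
          have hmem : w a + s' ∈ latSet w a b := by
            apply latSet_prepend (Or.inr rfl)
            rw [show a + ((0:ℤ),(1:ℤ)) = (a.1, a.2 + 1) from by simp [Prod.ext_iff]]
            exact hs'
          refine ⟨w a + s', hmem, ?_⟩
          rw [sum_Icc_split h2 (fun i => ∑ j ∈ Finset.Ico (y (i-1)) (y i), w (j, i))]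
          rw [sum_Icc_split h2 M]
          rw [hy1, hya, Finset.Ico_self, Finset.sum_empty]
          have hwa : -M a.2 ≤ w a := by
            have h1' := hM a.2 a.1 h0 (by omega)
            rw [Prod.mk.eta] at h1'
            have h2' := neg_abs_le (w a)
            linarith
          linarith

lemma path_le_semi (hM0 : ∀ i, 0 ≤ M i)
    (hM : ∀ i j, 0 ≤ j → j ≤ K → |w (j,i)| ≤ M i) :
    ∀ (N : ℕ) (a b : ℤ × ℤ) (π : ℕ → ℤ × ℤ),
      π 0 = a → (π N = b - (1, 0) ∨ π N = b - (0, 1)) →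
      (∀ k < N, π (k + 1) - π k = (1, 0) ∨ π (k + 1) - π k = (0, 1)) →
      0 ≤ a.1 → b.1 ≤ K →
      ∑ k ∈ Finset.range (N + 1), w (π k) ≤
        semiLPP (interpEnsemble w) (a.1:ℝ) a.2 (b.1:ℝ) b.2 + ∑ i ∈ Finset.Icc a.2 b.2, M i := by
  intro N
  induction N with
  | zero =>
    intro a b π h0 hN hinc ha hbK
    rw [Finset.sum_range_one, h0]
    rcases hN with h | h
    · have hb : b = (a.1 + 1, a.2) := by
        rw [h0] at h
        have h1 : a.1 = b.1 - 1 := by rw [h]; simp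
        have h2 : a.2 = b.2 - 0 := by rw [h]; simp
        apply Prod.ext <;> omega
      have hbK' : a.1 + 1 ≤ K := by rw [hb] at hbK; simpa using hbK
      rw [hb]
      show w a ≤ semiLPP (interpEnsemble w) (a.1:ℝ) a.2 ((a.1 + 1 : ℤ):ℝ) a.2 +
        ∑ i ∈ Finset.Icc a.2 a.2, M i
      have hbase := semi_base_h hM0 hM a.2 ha hbK'
      have hnn : (0:ℝ) ≤ ∑ i ∈ Finset.Icc a.2 a.2, M i :=
        Finset.sum_nonneg fun i _ => hM0 i
      have hwa : w a = w (a.1, a.2) := by rw [Prod.mk.eta]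
      linarith
    · have hb : b = (a.1, a.2 + 1) := by
        rw [h0] at h
        have h1 : a.1 = b.1 - 0 := by rw [h]; simp
        have h2 : a.2 = b.2 - 1 := by rw [h]; simp
        apply Prod.ext <;> omega
      have hbK' : a.1 ≤ K := by rw [hb] at hbK; simpa using hbK
      rw [hb]
      show w a ≤ semiLPP (interpEnsemble w) (a.1:ℝ) a.2 ((a.1 : ℤ):ℝ) (a.2 + 1) +
        ∑ i ∈ Finset.Icc a.2 (a.2 + 1), M i
      have hbase := semi_base_v hM0 hM a.2 ha hbK'
      have hwM : w a ≤ M a.2 := by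
        have h1' := hM a.2 a.1 ha hbK'
        rw [Prod.mk.eta] at h1'
        linarith [le_abs_self (w a)]
      have hsum : M a.2 ≤ ∑ i ∈ Finset.Icc a.2 (a.2 + 1), M i :=
        Finset.single_le_sum (fun i _ => hM0 i) (by rw [Finset.mem_Icc]; omega)
      linarith
  | succ N ihN =>
    intro a b π h0 hN hinc ha hbK
    have hstep0 := hinc 0 (by omega)
    have hsum : ∑ k ∈ Finset.range (N + 1 + 1), w (π k)
        = w a + ∑ k ∈ Finset.range (N + 1), w (π (k + 1)) := by
      rw [Finset.sum_range_succ' (fun k => w (π k)) (N + 1), h0]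
      ring
    have hπ'inc : ∀ k < N, π (k + 1 + 1) - π (k + 1) = ((1:ℤ),(0:ℤ)) ∨
        π (k + 1 + 1) - π (k + 1) = (0, 1) := fun k hk => hinc (k + 1) (by omega)
    have hm := path_mono hinc (show (1:ℕ) ≤ N + 1 by omega) le_rfl
    have hm0 := path_mono hinc (Nat.zero_le (N + 1)) le_rfl
    rw [h0] at hm0
    have hb' : (π 1).1 ≤ b.1 ∧ (π 1).2 ≤ b.2 := by
      rcases hN with h | h <;>
      · rw [h] at hm
        simp at hm
        constructor <;> omega
    have hab : a.1 ≤ b.1 ∧ a.2 ≤ b.2 := by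
      rcases hN with h | h <;>
      · rw [h] at hm0
        simp at hm0
        constructor <;> omega
    rcases hstep0 with h | h
    · have hπ1 : π 1 = (a.1 + 1, a.2) := by
        have e1 : (π 1).1 - (π 0).1 = 1 := congrArg Prod.fst h
        have e2 : (π 1).2 - (π 0).2 = 0 := congrArg Prod.snd h
        rw [h0] at e1 e2
        apply Prod.ext <;> omega
      have ih := ihN (a.1 + 1, a.2) b (fun k => π (k + 1))
        (by show π 1 = (a.1 + 1, a.2); exact hπ1) hN hπ'inc
        (by show 0 ≤ a.1 + 1; omega) hbK
      have ih' : ∑ k ∈ Finset.range (N + 1), w (π (k + 1)) ≤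
          semiLPP (interpEnsemble w) ((a.1 + 1 : ℤ):ℝ) a.2 (b.1:ℝ) b.2 +
            ∑ i ∈ Finset.Icc a.2 b.2, M i := ih
      have h1b : a.1 + 1 ≤ b.1 := by
        have := hb'.1
        rw [hπ1] at this
        simpa using this
      have hstep := semi_step_h hM0 hM ha h1b hab.2 hbK
      have hc : ((a.1:ℝ) + 1) = ((a.1 + 1 : ℤ):ℝ) := by push_cast; ring
      rw [hc] at hstep
      rw [hsum]
      linarith
    · have hπ1 : π 1 = (a.1, a.2 + 1) := by
        have e1 : (π 1).1 - (π 0).1 = 0 := congrArg Prod.fst h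
        have e2 : (π 1).2 - (π 0).2 = 1 := congrArg Prod.snd h
        rw [h0] at e1 e2
        apply Prod.ext <;> omega
      have ih := ihN (a.1, a.2 + 1) b (fun k => π (k + 1))
        (by show π 1 = (a.1, a.2 + 1); exact hπ1) hN hπ'inc
        (by show 0 ≤ a.1; exact ha) hbK
      have ih' : ∑ k ∈ Finset.range (N + 1), w (π (k + 1)) ≤
          semiLPP (interpEnsemble w) (a.1:ℝ) (a.2 + 1) (b.1:ℝ) b.2 +
            ∑ i ∈ Finset.Icc (a.2 + 1) b.2, M i := ih
      have h2b : a.2 + 1 ≤ b.2 := by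
        have := hb'.2
        rw [hπ1] at this
        simpa using this
      have hstep := semi_step_v hM0 hM ha hab.1 h2b hbK
      have hwM : w a ≤ M a.2 := by
        have h1' := hM a.2 a.1 ha (by omega)
        rw [Prod.mk.eta] at h1'
        linarith [le_abs_self (w a)]
      have hsplit : ∑ i ∈ Finset.Icc a.2 b.2, M i
          = M a.2 + ∑ i ∈ Finset.Icc (a.2 + 1) b.2, M i := sum_Icc_split hab.2 M
      rw [hsum]
      linarith

lemma perpair (hM0 : ∀ i, 0 ≤ M i)
    (hM : ∀ i j, 0 ≤ j → j ≤ K → |w (j,i)| ≤ M i)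
    {a b : ℤ × ℤ} (h0a1 : 0 ≤ a.1) (h01 : a.1 ≤ b.1) (hbK : b.1 ≤ K)
    (h0a2 : 0 ≤ a.2) (h02 : a.2 ≤ b.2) :
    |semiLPP (interpEnsemble w) (a.1:ℝ) a.2 (b.1:ℝ) b.2 - latticeLPP w a b| ≤
      3 * ∑ i ∈ Finset.Icc a.2 b.2, M i := by
  have hMsum : (0:ℝ) ≤ ∑ i ∈ Finset.Icc a.2 b.2, M i :=
    Finset.sum_nonneg fun i _ => hM0 i
  by_cases hab : a = b
  · rw [hab, semiLPP_eq, latticeLPP_eq, semiSet_diag, latSet_diag, csSup_singleton,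
      Real.sSup_empty, sub_zero, abs_zero]
    exact mul_nonneg (by norm_num) (Finset.sum_nonneg fun i _ => hM0 i)
  · rw [abs_sub_le_iff]
    constructor
    · rw [semiLPP_eq, sub_le_iff_le_add]
      have hne := semiSet_nonempty (interpEnsemble w) h02
        (show ((a.1:ℝ)) ≤ ((b.1:ℝ)) by exact_mod_cast h01)
      apply csSup_le hne
      rintro S ⟨z, hz1, hz2, hz3, rfl⟩
      have hy1 : ⌊z (a.2 - 1)⌋ = a.1 := by rw [hz1, Int.floor_intCast]
      have hy2 : ⌊z b.2⌋ = b.1 := by rw [hz2, Int.floor_intCast]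
      have hymono : ∀ i j, a.2 - 1 ≤ i → i ≤ j → j ≤ b.2 → ⌊z i⌋ ≤ ⌊z j⌋ :=
        fun i j hi hij hj => Int.floor_le_floor (hz3 i j hi hij hj)
      have hrow : ∀ i ∈ Finset.Icc a.2 b.2,
          interpEnsemble w i (z i) - interpEnsemble w i (z (i-1)) ≤
            (∑ j ∈ Finset.Ico ⌊z (i-1)⌋ ⌊z i⌋, w (j, i)) + 2 * M i := by
        intro i hi
        rw [Finset.mem_Icc] at hi
        have hzi := chain_mem hz1 hz2 hz3 (j := i) (by omega) (by omega)
        have hzi1 := chain_mem hz1 hz2 hz3 (j := i - 1) (by omega) (by omega)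
        exact interp_row_le hM0 hM i
          (le_trans (by exact_mod_cast h0a1) hzi1.1)
          (hz3 (i-1) i (by omega) (by omega) (by omega))
          (le_trans hzi.2 (by exact_mod_cast hbK))
      have hsum1 : ∑ i ∈ Finset.Icc a.2 b.2,
          (interpEnsemble w i (z i) - interpEnsemble w i (z (i-1))) ≤
          (∑ i ∈ Finset.Icc a.2 b.2, ∑ j ∈ Finset.Ico ⌊z (i-1)⌋ ⌊z i⌋, w (j, i)) +
            2 * ∑ i ∈ Finset.Icc a.2 b.2, M i := by
        calc ∑ i ∈ Finset.Icc a.2 b.2,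
            (interpEnsemble w i (z i) - interpEnsemble w i (z (i-1)))
            ≤ ∑ i ∈ Finset.Icc a.2 b.2,
              ((∑ j ∈ Finset.Ico ⌊z (i-1)⌋ ⌊z i⌋, w (j, i)) + 2 * M i) :=
              Finset.sum_le_sum hrow
          _ = (∑ i ∈ Finset.Icc a.2 b.2, ∑ j ∈ Finset.Ico ⌊z (i-1)⌋ ⌊z i⌋, w (j, i)) +
              2 * ∑ i ∈ Finset.Icc a.2 b.2, M i := by
              rw [Finset.sum_add_distrib, Finset.mul_sum]
      obtain ⟨s, hs, hGs⟩ := ladder hM0 hM (b.1 - a.1 + (b.2 - a.2)).toNat a b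
        (fun i => ⌊z i⌋)
        (by rw [Int.toNat_of_nonneg (by omega)]) hab h01 h02 h0a1 hbK hy1 hy2 hymono
      have hslat : s ≤ latticeLPP w a b := by
        rw [latticeLPP_eq]
        exact le_csSup (latSet_bddAbove hM0 hM h0a1 hbK) hs
      linarith
    · rw [latticeLPP_eq, sub_le_iff_le_add]
      have hlatne : (latSet w a b).Nonempty := by
        obtain ⟨s, hs, -⟩ := ladder hM0 hM (b.1 - a.1 + (b.2 - a.2)).toNat a b
          (fun i => if i ≤ b.2 - 1 then a.1 else b.1)
          (by rw [Int.toNat_of_nonneg (by omega)]) hab h01 h02 h0a1 hbK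
          (by show (if a.2 - 1 ≤ b.2 - 1 then a.1 else b.1) = a.1; rw [if_pos (by omega)])
          (by show (if b.2 ≤ b.2 - 1 then a.1 else b.1) = b.1; rw [if_neg (by omega)])
          (by
            intro i j _ hij _
            show (if i ≤ b.2 - 1 then a.1 else b.1) ≤ (if j ≤ b.2 - 1 then a.1 else b.1)
            by_cases hj : j ≤ b.2 - 1
            · rw [if_pos (by omega), if_pos hj]
            · rw [if_neg hj]
              by_cases hi : i ≤ b.2 - 1
              · rw [if_pos hi]; exact h01
              · rw [if_neg hi])
        exact ⟨s, hs⟩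
      apply csSup_le hlatne
      rintro S ⟨N, π, hπ0, hπN, hinc, rfl⟩
      have hkey := path_le_semi hM0 hM N a b π hπ0 hπN hinc h0a1 hbK
      rw [semiLPP_eq] at hkey ⊢
      linarith

lemma dsup_le (hM0 : ∀ i, 0 ≤ M i)
    (hM : ∀ i j, 0 ≤ j → j ≤ K → |w (j,i)| ≤ M i) {nn : ℤ} :
    sSup {D : ℝ | ∃ a b : ℤ × ℤ,
      a.1 ∈ Set.Icc (0:ℤ) K ∧ a.2 ∈ Set.Icc (0:ℤ) nn ∧
      b.1 ∈ Set.Icc (0:ℤ) K ∧ b.2 ∈ Set.Icc (0:ℤ) nn ∧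
      a.1 ≤ b.1 ∧ a.2 ≤ b.2 ∧
      D = |semiLPP (interpEnsemble w) (a.1:ℝ) a.2 (b.1:ℝ) b.2 - latticeLPP w a b|} ≤
    3 * ∑ i ∈ Finset.Icc 0 nn, M i := by
  have hnn0 : (0:ℝ) ≤ 3 * ∑ i ∈ Finset.Icc 0 nn, M i :=
    mul_nonneg (by norm_num) (Finset.sum_nonneg fun i _ => hM0 i)
  apply Real.sSup_le _ hnn0
  rintro D ⟨a, b, ha1, ha2, hb1, hb2, hab1, hab2, rfl⟩
  rw [Set.mem_Icc] at ha1 ha2 hb1 hb2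
  refine le_trans (perpair hM0 hM ha1.1 hab1 hb1.2 ha2.1 hab2) ?_
  have hsub : ∑ i ∈ Finset.Icc a.2 b.2, M i ≤ ∑ i ∈ Finset.Icc 0 nn, M i :=
    Finset.sum_le_sum_of_subset_of_nonneg
      (Finset.Icc_subset_Icc (by omega) (by omega)) (fun i _ _ => hM0 i)
  linarith

end Det

end Stmt4Aux

open scoped ENNReal Topology

set_option maxHeartbeats 2000000 in
/-- for i.i.d. weights with finite `p`-th moment (`p > 2`) and any `β > 0`, `ε > 0`,
the probability that the maximal discrepancy between the interpolated semi-discrete passage times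
and the lattice passage times over the box `[0, ⌊n^β⌋] × [0, n]` exceeds `n^{1 + β/p + ε}`
tends to `0` as `n → ∞`. -/
theorem stmt4 {Ω : Type*} [MeasureSpace Ω] [IsProbabilityMeasure (ℙ : Measure Ω)]
    (p β ε : ℝ) (hp : 2 < p) (hβ : 0 < β) (hε : 0 < ε)
    (ω : ℤ × ℤ → Ω → ℝ) (hmeas : ∀ a, Measurable (ω a))
    (hindep : iIndepFun ω ℙ)
    (hident : ∀ a, IdentDistrib (ω a) (ω (0, 0)) ℙ ℙ)
    (hmom : MemLp (ω (0, 0)) (ENNReal.ofReal p) ℙ) :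
    Tendsto (fun n : ℕ => ℙ {x : Ω |
        sSup {D : ℝ | ∃ a b : ℤ × ℤ,
          a.1 ∈ Set.Icc (0 : ℤ) ⌊(n : ℝ) ^ β⌋ ∧ a.2 ∈ Set.Icc (0 : ℤ) (n : ℤ) ∧
          b.1 ∈ Set.Icc (0 : ℤ) ⌊(n : ℝ) ^ β⌋ ∧ b.2 ∈ Set.Icc (0 : ℤ) (n : ℤ) ∧
          a.1 ≤ b.1 ∧ a.2 ≤ b.2 ∧
          D = |semiLPP (interpEnsemble (fun r => ω r x)) (a.1 : ℝ) a.2 (b.1 : ℝ) b.2 -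
                latticeLPP (fun r => ω r x) a b|} > (n : ℝ) ^ (1 + β / p + ε)})
      atTop (nhds 0) := by
  have hp0 : (0:ℝ) < p := by linarith
  have hp1 : (1:ℝ) ≤ p := by linarith
  have hgmeas : Measurable fun u : ℝ => ENNReal.ofReal (|u| ^ p) :=
    ENNReal.measurable_ofReal.comp ((measurable_id.abs).pow measurable_const)
  set J : ℝ≥0∞ := ∫⁻ x, ENNReal.ofReal (|ω (0,0) x| ^ p) ∂ℙ with hJdef
  have hJeq : ∀ r : ℤ × ℤ, (∫⁻ x, ENNReal.ofReal (|ω r x| ^ p) ∂ℙ) = J := by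
    intro r
    have h1 : ∀ r' : ℤ × ℤ, (∫⁻ x, ENNReal.ofReal (|ω r' x| ^ p) ∂ℙ)
        = ∫⁻ u, ENNReal.ofReal (|u| ^ p) ∂(Measure.map (ω r') ℙ) := fun r' =>
      (lintegral_map hgmeas (hmeas r')).symm
    rw [h1 r, hJdef, h1 (0,0), (hident r).map_eq]
  have hJfin : J ≠ ⊤ := by
    have h2 := hmom.2
    rw [eLpNorm_eq_lintegral_rpow_enorm_toReal (ENNReal.ofReal_pos.2 hp0).ne'
      ENNReal.ofReal_ne_top] at h2
    rw [ENNReal.toReal_ofReal hp0.le] at h2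
    have h3 : (∫⁻ x, ‖ω (0,0) x‖ₑ ^ p ∂ℙ) = J := by
      rw [hJdef]
      apply lintegral_congr
      intro x
      rw [Real.enorm_eq_ofReal_abs, ← ENNReal.ofReal_rpow_of_nonneg (abs_nonneg _) hp0.le]
    rw [h3] at h2
    exact ((ENNReal.rpow_lt_top_iff_of_pos (by positivity : (0:ℝ) < 1/p)).1 h2).ne
  have hgtend : Tendsto (fun n : ℕ =>
      ENNReal.ofReal ((4 * 6 ^ p * J.toReal) * (n:ℝ) ^ (-(p * ε)))) atTop (𝓝 0) := by
    have h1 : Tendsto (fun x : ℝ => x ^ (-(p * ε))) atTop (𝓝 0) :=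
      tendsto_rpow_neg_atTop (by positivity)
    have h2 : Tendsto (fun n : ℕ => ((n:ℝ)) ^ (-(p * ε))) atTop (𝓝 0) :=
      h1.comp tendsto_natCast_atTop_atTop
    have h3 := h2.const_mul (4 * 6 ^ p * J.toReal)
    rw [mul_zero] at h3
    have h4 := ENNReal.tendsto_ofReal h3
    rwa [ENNReal.ofReal_zero] at h4
  refine tendsto_of_tendsto_of_tendsto_of_le_of_le' tendsto_const_nhds hgtend
    (Eventually.of_forall fun n => zero_le) ?_
  filter_upwards [eventually_ge_atTop 1] with n hn1
  set nR : ℝ := (n:ℝ) with hnRdef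
  have hnR1 : (1:ℝ) ≤ nR := by rw [hnRdef]; exact_mod_cast hn1
  have hnR0 : (0:ℝ) < nR := by linarith
  have hnb1 : (1:ℝ) ≤ nR ^ β := Real.one_le_rpow hnR1 hβ.le
  set Kz : ℤ := ⌊nR ^ β⌋ with hKzdef
  have hKz0 : 0 ≤ Kz := Int.floor_nonneg.2 (by linarith)
  have hKzle : (Kz:ℝ) ≤ nR ^ β := Int.floor_le _
  set tval : ℝ := nR ^ (1 + β / p + ε) with htvaldef
  have htval0 : 0 ≤ tval := by positivity
  set U : Ω → ℝ := fun x =>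
    ∑ i ∈ Finset.Icc (0:ℤ) (n:ℤ), ∑ j ∈ Finset.Icc (0:ℤ) Kz, |ω (j,i) x| ^ p with hUdef
  set c : ℝ := nR ^ (1 + β + p * ε) / 6 ^ p with hcdef
  have hc0 : 0 < c := by positivity
  have hcard : ((Finset.Icc (0:ℤ) (n:ℤ)).card : ℝ) = nR + 1 := by
    rw [Int.card_Icc]
    have h1 : ((n:ℤ) + 1 - 0).toNat = n + 1 := by omega
    rw [h1, hnRdef]
    push_cast
    ring
  have hcardJ : ((Finset.Icc (0:ℤ) Kz).card : ℝ) = (Kz:ℝ) + 1 := by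
    rw [Int.card_Icc]
    have h1 : ((Kz + 1 - 0).toNat : ℤ) = Kz + 1 := by
      rw [Int.toNat_of_nonneg (by omega)]; ring
    exact_mod_cast congrArg (fun z : ℤ => (z : ℝ)) h1
  -- deterministic bound
  have hdet : ∀ x : Ω,
      sSup {D : ℝ | ∃ a b : ℤ × ℤ,
        a.1 ∈ Set.Icc (0 : ℤ) Kz ∧ a.2 ∈ Set.Icc (0 : ℤ) (n : ℤ) ∧
        b.1 ∈ Set.Icc (0 : ℤ) Kz ∧ b.2 ∈ Set.Icc (0 : ℤ) (n : ℤ) ∧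
        a.1 ≤ b.1 ∧ a.2 ≤ b.2 ∧
        D = |semiLPP (interpEnsemble (fun r => ω r x)) (a.1 : ℝ) a.2 (b.1 : ℝ) b.2 -
              latticeLPP (fun r => ω r x) a b|} > tval → c ≤ U x := by
    intro x hx
    have hne : (Finset.Icc (0:ℤ) Kz).Nonempty := Finset.nonempty_Icc.2 hKz0
    set M : ℤ → ℝ := fun i => (Finset.Icc (0:ℤ) Kz).sup' hne (fun j => |ω (j,i) x|) with hMdef
    have hM0 : ∀ i, 0 ≤ M i := by
      intro i
      show (0:ℝ) ≤ (Finset.Icc (0:ℤ) Kz).sup' hne fun j => |ω (j,i) x|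
      exact le_trans (abs_nonneg (ω (0,i) x))
        (Finset.le_sup' (fun j => |ω (j,i) x|) (Finset.mem_Icc.2 ⟨le_rfl, hKz0⟩))
    have hMle : ∀ i j : ℤ, 0 ≤ j → j ≤ Kz → |(fun r => ω r x) (j,i)| ≤ M i := by
      intro i j h1 h2
      show |ω (j,i) x| ≤ (Finset.Icc (0:ℤ) Kz).sup' hne fun j => |ω (j,i) x|
      exact Finset.le_sup' (fun j => |ω (j,i) x|) (Finset.mem_Icc.2 ⟨h1, h2⟩)
    have hkey := Stmt4Aux.dsup_le (w := fun r => ω r x) (K := Kz) hM0 hMle (nn := (n:ℤ))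
    have hB : tval < 3 * ∑ i ∈ Finset.Icc (0:ℤ) (n:ℤ), M i := lt_of_lt_of_le hx hkey
    set B : ℝ := ∑ i ∈ Finset.Icc (0:ℤ) (n:ℤ), M i with hBdef
    have hB0 : 0 ≤ B := Finset.sum_nonneg fun i _ => hM0 i
    have hw2 : ∑ _i ∈ Finset.Icc (0:ℤ) (n:ℤ), 1/(nR+1) = 1 := by
      rw [Finset.sum_const, nsmul_eq_mul, hcard]
      field_simp
    have hpm := Real.rpow_arith_mean_le_arith_mean_rpow (Finset.Icc (0:ℤ) (n:ℤ))
      (fun _ => 1/(nR+1)) M (fun i _ => by positivity) hw2 (fun i _ => hM0 i) hp1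
    have hL : ∑ i ∈ Finset.Icc (0:ℤ) (n:ℤ), 1/(nR+1) * M i = (1/(nR+1)) * B := by
      rw [hBdef, Finset.mul_sum]
    have hMp : ∀ i ∈ Finset.Icc (0:ℤ) (n:ℤ),
        M i ^ p ≤ ∑ j ∈ Finset.Icc (0:ℤ) Kz, |ω (j,i) x| ^ p := by
      intro i _
      obtain ⟨j0, hj0, hj0eq⟩ := Finset.exists_mem_eq_sup' hne (fun j => |ω (j,i) x|)
      have : M i = |ω (j0,i) x| := hj0eq
      rw [this]
      exact Finset.single_le_sum (f := fun j => |ω (j,i) x| ^ p)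
        (fun j _ => Real.rpow_nonneg (abs_nonneg _) p) hj0
    have hR : ∑ i ∈ Finset.Icc (0:ℤ) (n:ℤ), 1/(nR+1) * M i ^ p ≤ (1/(nR+1)) * U x := by
      rw [hUdef]
      simp only []
      rw [Finset.mul_sum]
      exact Finset.sum_le_sum fun i hi =>
        mul_le_mul_of_nonneg_left (hMp i hi) (by positivity)
    have hcomb : ((1/(nR+1)) * B) ^ p ≤ (1/(nR+1)) * U x := by
      rw [← hL]
      exact le_trans hpm hR
    have h6 : tval / (3*(nR+1)) ≤ (1/(nR+1)) * B := by
      rw [div_le_iff₀ (by positivity)]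
      have he : (1/(nR+1)) * B * (3*(nR+1)) = 3 * B := by
        field_simp
      rw [he]
      linarith
    have h7 : (tval / (3*(nR+1))) ^ p ≤ (1/(nR+1)) * U x :=
      le_trans (Real.rpow_le_rpow (by positivity) h6 hp0.le) hcomb
    have h8 : c ≤ (tval / (3*(nR+1))) ^ p * (nR + 1) := by
      have e1 : nR ^ (β/p + ε) / 6 ≤ tval / (3*(nR+1)) := by
        rw [div_le_div_iff₀ (by norm_num) (by positivity)]
        have e2 : tval = nR * nR ^ (β/p + ε) := by
          rw [htvaldef, show (1:ℝ) + β/p + ε = 1 + (β/p + ε) by ring,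
            Real.rpow_add hnR0, Real.rpow_one]
        rw [e2]
        have e4 : (0:ℝ) ≤ nR ^ (β/p+ε) := by positivity
        nlinarith
      have e5 : (nR ^ (β/p+ε) / 6) ^ p ≤ (tval/(3*(nR+1)))^p :=
        Real.rpow_le_rpow (by positivity) e1 hp0.le
      have e6 : (nR ^ (β/p+ε) / 6) ^ p = nR ^ (β + p*ε) / 6 ^ p := by
        rw [Real.div_rpow (by positivity) (by norm_num)]
        congr 1
        rw [← Real.rpow_mul hnR0.le]
        congr 1
        field_simp
      have e7 : c = nR * nR ^ (β+p*ε) / 6^p := by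
        rw [hcdef, show (1:ℝ) + β + p*ε = 1 + (β+p*ε) by ring,
          Real.rpow_add hnR0, Real.rpow_one]
      have hpos : (0:ℝ) ≤ nR ^ (β+p*ε) / 6 ^ p := by positivity
      calc c = (nR ^ (β+p*ε) / 6^p) * nR := by rw [e7]; ring
        _ ≤ (nR ^ (β+p*ε) / 6^p) * (nR+1) := mul_le_mul_of_nonneg_left (by linarith) hpos
        _ = (nR ^ (β/p+ε) / 6) ^ p * (nR+1) := by rw [e6]
        _ ≤ (tval/(3*(nR+1)))^p * (nR+1) :=
            mul_le_mul_of_nonneg_right e5 (by linarith)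
    have h9 : (1/(nR+1)) * U x * (nR+1) = U x := by
      field_simp
    calc c ≤ (tval/(3*(nR+1)))^p * (nR+1) := h8
      _ ≤ (1/(nR+1)) * U x * (nR+1) := mul_le_mul_of_nonneg_right h7 (by linarith)
      _ = U x := h9
  -- measurability
  have hUmeas : Measurable fun x => ENNReal.ofReal (U x) := by
    apply ENNReal.measurable_ofReal.comp
    rw [hUdef]
    apply Finset.measurable_sum
    intro i _
    apply Finset.measurable_sum
    intro j _
    exact ((hmeas (j,i)).abs).pow measurable_const
  -- Markov
  have hmarkov : ℙ {x : Ω |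
      sSup {D : ℝ | ∃ a b : ℤ × ℤ,
        a.1 ∈ Set.Icc (0 : ℤ) Kz ∧ a.2 ∈ Set.Icc (0 : ℤ) (n : ℤ) ∧
        b.1 ∈ Set.Icc (0 : ℤ) Kz ∧ b.2 ∈ Set.Icc (0 : ℤ) (n : ℤ) ∧
        a.1 ≤ b.1 ∧ a.2 ≤ b.2 ∧
        D = |semiLPP (interpEnsemble (fun r => ω r x)) (a.1 : ℝ) a.2 (b.1 : ℝ) b.2 -
              latticeLPP (fun r => ω r x) a b|} > tval} ≤
      (∫⁻ x, ENNReal.ofReal (U x) ∂ℙ) / ENNReal.ofReal c := by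
    have hsub : {x : Ω |
        sSup {D : ℝ | ∃ a b : ℤ × ℤ,
          a.1 ∈ Set.Icc (0 : ℤ) Kz ∧ a.2 ∈ Set.Icc (0 : ℤ) (n : ℤ) ∧
          b.1 ∈ Set.Icc (0 : ℤ) Kz ∧ b.2 ∈ Set.Icc (0 : ℤ) (n : ℤ) ∧
          a.1 ≤ b.1 ∧ a.2 ≤ b.2 ∧
          D = |semiLPP (interpEnsemble (fun r => ω r x)) (a.1 : ℝ) a.2 (b.1 : ℝ) b.2 -
                latticeLPP (fun r => ω r x) a b|} > tval} ⊆
        {x : Ω | ENNReal.ofReal c ≤ ENNReal.ofReal (U x)} := fun x hx =>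
      ENNReal.ofReal_le_ofReal (hdet x hx)
    refine le_trans (measure_mono hsub) ?_
    rw [ENNReal.le_div_iff_mul_le (Or.inl (ENNReal.ofReal_pos.2 hc0).ne')
      (Or.inl ENNReal.ofReal_ne_top), mul_comm]
    exact mul_meas_ge_le_lintegral₀ hUmeas.aemeasurable _
  have hcomp : ∀ r : ℤ × ℤ, Measurable fun x => ENNReal.ofReal (|ω r x| ^ p) :=
    fun r => hgmeas.comp (hmeas r)
  -- lintegral value
  have hlint : (∫⁻ x, ENNReal.ofReal (U x) ∂ℙ) =
      (((Finset.Icc (0:ℤ) (n:ℤ)).card : ℝ≥0∞) * ((Finset.Icc (0:ℤ) Kz).card : ℝ≥0∞)) * J := by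
    have h1 : ∀ x, ENNReal.ofReal (U x) = ∑ i ∈ Finset.Icc (0:ℤ) (n:ℤ),
        ∑ j ∈ Finset.Icc (0:ℤ) Kz, ENNReal.ofReal (|ω (j,i) x| ^ p) := by
      intro x
      rw [hUdef]
      simp only []
      rw [ENNReal.ofReal_sum_of_nonneg
        (fun i _ => Finset.sum_nonneg fun j _ => Real.rpow_nonneg (abs_nonneg _) p)]
      exact Finset.sum_congr rfl fun i _ => ENNReal.ofReal_sum_of_nonneg
        (fun j _ => Real.rpow_nonneg (abs_nonneg _) p)
    rw [lintegral_congr h1]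
    rw [lintegral_finset_sum _ (fun i _ =>
      (Finset.measurable_sum _ (fun j _ => hcomp (j,i)) :
        Measurable fun x => ∑ j ∈ Finset.Icc (0:ℤ) Kz, ENNReal.ofReal (|ω (j,i) x| ^ p)))]
    have h2 : ∀ i : ℤ, (∫⁻ x, ∑ j ∈ Finset.Icc (0:ℤ) Kz,
        ENNReal.ofReal (|ω (j,i) x| ^ p) ∂ℙ) = ((Finset.Icc (0:ℤ) Kz).card : ℝ≥0∞) * J := by
      intro i
      rw [lintegral_finset_sum _ (fun j _ => hcomp (j,i))]
      rw [Finset.sum_congr rfl (fun j _ => hJeq (j,i))]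
      rw [Finset.sum_const, nsmul_eq_mul]
    rw [Finset.sum_congr rfl (fun i _ => h2 i), Finset.sum_const, nsmul_eq_mul, mul_assoc]
  refine le_trans hmarkov ?_
  rw [hlint]
  have hLfin : (((Finset.Icc (0:ℤ) (n:ℤ)).card : ℝ≥0∞) * ((Finset.Icc (0:ℤ) Kz).card : ℝ≥0∞)) * J
      / ENNReal.ofReal c = ENNReal.ofReal
      (((Finset.Icc (0:ℤ) (n:ℤ)).card : ℝ) * ((Finset.Icc (0:ℤ) Kz).card : ℝ) * J.toReal / c) := by
    rw [ENNReal.ofReal_div_of_pos hc0,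
      ENNReal.ofReal_mul (mul_nonneg (Nat.cast_nonneg _) (Nat.cast_nonneg _)),
      ENNReal.ofReal_mul (Nat.cast_nonneg _), ENNReal.ofReal_natCast, ENNReal.ofReal_natCast,
      ENNReal.ofReal_toReal hJfin]
  rw [hLfin]
  apply ENNReal.ofReal_le_ofReal
  have hJ0 : 0 ≤ J.toReal := ENNReal.toReal_nonneg
  have hnum : ((Finset.Icc (0:ℤ) (n:ℤ)).card : ℝ) * ((Finset.Icc (0:ℤ) Kz).card : ℝ) ≤
      4 * (nR * nR ^ β) := by
    rw [hcard, hcardJ]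
    nlinarith [hKzle, hnb1, hnR1]
  have hkey2 : nR ^ (1+β) / nR ^ (1+β+p*ε) = nR ^ (-(p*ε)) := by
    rw [← Real.rpow_sub hnR0]
    congr 1
    ring
  have h6p : (0:ℝ) < 6 ^ p := by positivity
  have hE : (0:ℝ) < nR ^ (1+β+p*ε) := by positivity
  have hrw : nR ^ (1+β) = nR * nR ^ β := by
    rw [Real.rpow_add hnR0, Real.rpow_one]
  rw [← hkey2, hcdef, div_div_eq_mul_div, div_le_iff₀ hE]
  have hc2 : 4 * 6 ^ p * J.toReal * (nR ^ (1+β) / nR ^ (1+β+p*ε)) * nR ^ (1+β+p*ε)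
      = 4 * 6 ^ p * J.toReal * nR ^ (1+β) := by
    field_simp
  rw [hc2, hrw]
  have hfin := mul_le_mul_of_nonneg_right hnum (mul_nonneg hJ0 h6p.le)
  nlinarith [hfin]
end
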